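/- arXiv:2105.06347 — 9 statements merged into one kernel-verified Lean document; each statement's English description precedes it below -/
import Mathlib

section
/- If P is an irreducible and reversible Markov chain on state space [d] with stationary distribution π, and S is a nonempty subset of [d], then the censored (watched) chain P_cen(S), defined by P_cen(S) = P_S + Σ_{t=1}^∞ P_{S,S^c} (P_{S^c})^t P_{S^c,S}, is reversible with respect to the distribution π_S(i) = π(i)/π(S). -/
open Matrix BigOperators Finset

noncomputable def rho {n : Type*} [Fintype n] [DecidableEq n] (A : Matrix n n ℝ) : ℝ :=
  (spectralRadius ℂ (A.map (algebraMap ℝ ℂ))).toReal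

noncomputable def sqrtm {m n : Type*} (A : Matrix m n ℝ) : Matrix m n ℝ :=
  Matrix.of fun i j => Real.sqrt (A i j)

noncomputable def mcDist {n : Type*} [Fintype n] [DecidableEq n] (P Q : Matrix n n ℝ) : ℝ :=
  1 - rho (sqrtm (Matrix.hadamard P Q))

def IsStochastic {d : ℕ} (P : Matrix (Fin d) (Fin d) ℝ) : Prop :=
  (∀ i j, 0 ≤ P i j) ∧ ∀ i, ∑ j, P i j = 1

def IsIrreducibleMC {d : ℕ} (P : Matrix (Fin d) (Fin d) ℝ) : Prop :=
  ∀ i j, ∃ k, 0 < (P ^ k) i j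

def IsStationaryMC {d : ℕ} (P : Matrix (Fin d) (Fin d) ℝ) (π : Fin d → ℝ) : Prop :=
  (∀ i, 0 < π i) ∧ (∑ i, π i = 1) ∧ ∀ j, ∑ i, π i * P i j = π j

def IsReversible {d : ℕ} (P : Matrix (Fin d) (Fin d) ℝ) (π : Fin d → ℝ) : Prop :=
  ∀ i j, π i * P i j = π j * P j i

def subm {d : ℕ} (P : Matrix (Fin d) (Fin d) ℝ) (R T : Finset (Fin d)) :
    Matrix {x // x ∈ R} {x // x ∈ T} ℝ :=
  Matrix.of fun i j => P i.1 j.1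

noncomputable def censored {d : ℕ} (P : Matrix (Fin d) (Fin d) ℝ) (S : Finset (Fin d)) :
    Matrix {x // x ∈ S} {x // x ∈ S} ℝ :=
  subm P S S + ∑' t : ℕ, subm P S Sᶜ * (subm P Sᶜ Sᶜ) ^ (t + 1) * subm P Sᶜ S

/-!
Reversibility of `P` with respect to `π` says that `diagonal π * P` is symmetric, and this
passes to every block: `diagonal π_R * P_{R,T}` is the transpose of `diagonal π_T * P_{T,R}`.
Hence `diagonal π_S * P_{S,Sᶜ} Q^t P_{Sᶜ,S} = P_{Sᶜ,S}ᵀ (diagonal π_{Sᶜ} Q^t) P_{Sᶜ,S}` with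
`Q = P_{Sᶜ}` is symmetric, and so is every term of the series defining the censored chain, and
its sum.
-/

/-- Detailed balance `w i * A i j = w j * A j i`, phrased as symmetry of `diagonal w * A`. -/
def IsDetailedBalanced {ι : Type*} [Fintype ι] [DecidableEq ι] (w : ι → ℝ) (A : Matrix ι ι ℝ) :
    Prop :=
  (diagonal w * A).IsSymm

namespace IsDetailedBalanced

variable {ι κ : Type*} [Fintype ι] [DecidableEq ι] [Fintype κ] [DecidableEq κ]
  {w : ι → ℝ} {v : κ → ℝ}

theorem iff_forall {A : Matrix ι ι ℝ} :
    IsDetailedBalanced w A ↔ ∀ i j, w i * A i j = w j * A j i := by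
  simp only [IsDetailedBalanced, IsSymm.ext_iff, diagonal_mul]
  exact ⟨fun h i j => (h i j).symm, fun h i j => (h i j).symm⟩

theorem transpose_mul_diagonal {A : Matrix ι ι ℝ} (h : IsDetailedBalanced w A) :
    Aᵀ * diagonal w = diagonal w * A := by
  rw [← h.eq, transpose_mul, diagonal_transpose]

theorem pow {A : Matrix ι ι ℝ} (h : IsDetailedBalanced w A) (n : ℕ) :
    IsDetailedBalanced w (A ^ n) := by
  induction n with
  | zero => simp [IsDetailedBalanced, isSymm_diagonal]
  | succ n ih =>
    unfold IsDetailedBalanced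
    calc (diagonal w * A ^ (n + 1))ᵀ = Aᵀ * (diagonal w * A ^ n)ᵀ := by
          rw [pow_succ, ← mul_assoc, transpose_mul]
      _ = diagonal w * A ^ (n + 1) := by
          rw [ih.eq, ← mul_assoc, h.transpose_mul_diagonal, mul_assoc, pow_succ']

/-- `hBC` reads `w i * B i k = v k * C k i`. -/
theorem mul_mul {B : Matrix ι κ ℝ} {C : Matrix κ ι ℝ} {M : Matrix κ κ ℝ}
    (hBC : (diagonal w * B)ᵀ = diagonal v * C) (hM : IsDetailedBalanced v M) :
    IsDetailedBalanced w (B * M * C) := by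
  have h : diagonal w * (B * M * C) = Cᵀ * (diagonal v * M) * C := by
    rw [← Matrix.mul_assoc, ← Matrix.mul_assoc, ← transpose_transpose (diagonal w * B), hBC,
      transpose_mul, diagonal_transpose, Matrix.mul_assoc Cᵀ]
  unfold IsDetailedBalanced
  rw [h, IsSymm, transpose_mul, transpose_mul, transpose_transpose, hM.eq]
  exact (Matrix.mul_assoc _ _ _).symm

theorem add {A B : Matrix ι ι ℝ} (hA : IsDetailedBalanced w A) (hB : IsDetailedBalanced w B) :
    IsDetailedBalanced w (A + B) := by
  unfold IsDetailedBalanced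
  rw [mul_add]
  exact IsSymm.add hA hB

theorem tsum {α : Type*} {f : α → Matrix ι ι ℝ} (hf : ∀ t, IsDetailedBalanced w (f t)) :
    IsDetailedBalanced w (∑' t, f t) := by
  by_cases hs : Summable f
  · unfold IsDetailedBalanced
    rw [IsSymm, ← hs.tsum_mul_left, transpose_tsum]
    exact tsum_congr fun t => (hf t).eq
  · -- a non-summable series has the junk value `0`, which is symmetric
    rw [tsum_eq_zero_of_not_summable hs]
    simp [IsDetailedBalanced, isSymm_zero]

end IsDetailedBalanced

section Reversible

variable {d : ℕ} {P : Matrix (Fin d) (Fin d) ℝ} {π : Fin d → ℝ}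

theorem IsReversible.transpose_diagonal_mul_subm (hrev : IsReversible P π) (R T : Finset (Fin d)) :
    (diagonal (fun i : R => π i) * subm P R T)ᵀ = diagonal (fun j : T => π j) * subm P T R := by
  ext j i
  simpa [subm] using hrev i j

theorem IsReversible.isDetailedBalanced_subm (hrev : IsReversible P π) (R : Finset (Fin d)) :
    IsDetailedBalanced (fun i : R => π i) (subm P R R) :=
  hrev.transpose_diagonal_mul_subm R R

theorem IsReversible.isDetailedBalanced_censored (hrev : IsReversible P π) (S : Finset (Fin d)) :
    IsDetailedBalanced (fun i : S => π i) (censored P S) :=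
  (hrev.isDetailedBalanced_subm S).add <| IsDetailedBalanced.tsum fun t =>
    IsDetailedBalanced.mul_mul (hrev.transpose_diagonal_mul_subm S Sᶜ)
      ((hrev.isDetailedBalanced_subm Sᶜ).pow (t + 1))

end Reversible

theorem censored_reversible_general {d : ℕ} (P : Matrix (Fin d) (Fin d) ℝ) (π : Fin d → ℝ)
    (hrev : IsReversible P π)
    (S : Finset (Fin d)) :
    ∀ i j : {x // x ∈ S},
      (π i.1 / ∑ k ∈ S, π k) * censored P S i j
        = (π j.1 / ∑ k ∈ S, π k) * censored P S j i := by
  intro i j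
  rw [div_mul_eq_mul_div, div_mul_eq_mul_div,
    IsDetailedBalanced.iff_forall.mp (hrev.isDetailedBalanced_censored S) i j]

/-- The censored (watched) chain of an irreducible reversible Markov chain on a
nonempty subset `S` is reversible with respect to `π_S(i) = π(i)/π(S)`. -/
theorem censored_reversible {d : ℕ} (P : Matrix (Fin d) (Fin d) ℝ) (π : Fin d → ℝ)
    (hP : IsStochastic P) (hirr : IsIrreducibleMC P)
    (hstat : IsStationaryMC P π) (hrev : IsReversible P π)
    (S : Finset (Fin d)) (hS : S.Nonempty) :
    ∀ i j : {x // x ∈ S},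
      (π i.1 / ∑ k ∈ S, π k) * censored P S i j
        = (π j.1 / ∑ k ∈ S, π k) * censored P S j i :=
  censored_reversible_general P π hrev S
end

section
/- Let P and P̄ be irreducible Markov chains on [d] with stationary distributions π and π̄, respectively, and let P* = diag(π)^{-1} Pᵀ diag(π) and P̄* = diag(π̄)^{-1} P̄ᵀ diag(π̄) denote their time reversals. Then ρ(√(P*∘P̄*)) = ρ(√(P∘P̄)), i.e., Distance(P*,P̄*) = Distance(P,P̄). -/
/-!
With `D = diag √(π ⊙ π̄)`, the entries of `√(P* ⊙ P̄*)` are `√(π j π̄ j) √(P j i P̄ j i) / √(π i π̄ i)`,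
so `√(P* ⊙ P̄*) = D⁻¹ √(P ⊙ P̄)ᵀ D`. The spectral radius is invariant under transposition and
under similarity, hence both matrices have the same spectral radius.
-/

open Matrix BigOperators Finset

def IsStationaryDist {d : ℕ} (P : Matrix (Fin d) (Fin d) ℝ) (π : Fin d → ℝ) : Prop :=
  (∀ i, 0 < π i) ∧ (∑ i, π i = 1) ∧ ∀ j, ∑ i, π i * P i j = π j

/-- The time reversal `P* = diag(π)⁻¹ Pᵀ diag(π)`. -/
noncomputable def timeReversal {d : ℕ} (P : Matrix (Fin d) (Fin d) ℝ) (π : Fin d → ℝ) :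
    Matrix (Fin d) (Fin d) ℝ :=
  Matrix.of fun i j => π j * P j i / π i

section SpectralRadius

variable {n : Type*} [Fintype n] [DecidableEq n]

theorem Matrix.spectrum_transpose {R : Type*} [CommRing R] (A : Matrix n n R) :
    spectrum R Aᵀ = spectrum R A := by
  ext r
  simp only [mem_spectrum_iff_not_isUnit_eval_charpoly, charpoly_transpose]

theorem rho_transpose (A : Matrix n n ℝ) : rho Aᵀ = rho A := by
  rw [rho, rho, transpose_map, spectralRadius, spectralRadius, Matrix.spectrum_transpose]

theorem rho_units_conjugate (A : Matrix n n ℝ) (u : (Matrix n n ℝ)ˣ) :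
    rho (u⁻¹.val * A * u.val) = rho A := by
  let v : (Matrix n n ℂ)ˣ := Units.map (algebraMap ℝ ℂ).mapMatrix.toMonoidHom u
  have hmap : (u⁻¹.val * A * u.val).map (algebraMap ℝ ℂ)
      = v⁻¹.val * A.map (algebraMap ℝ ℂ) * v.val := by
    simp only [Matrix.map_mul]; rfl
  rw [rho, rho, hmap, spectralRadius, spectralRadius, spectrum.units_conjugate']

theorem rho_diagonal_inv_mul_mul_diagonal (A : Matrix n n ℝ) {w : n → ℝ} (hw : ∀ i, w i ≠ 0) :
    rho (diagonal w⁻¹ * A * diagonal w) = rho A :=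
  rho_units_conjugate A
    ⟨diagonal w, diagonal w⁻¹, by simp [diagonal_mul_diagonal, hw],
      by simp [diagonal_mul_diagonal, hw]⟩

end SpectralRadius

theorem sqrtm_hadamard_timeReversal {d : ℕ} (P Q : Matrix (Fin d) (Fin d) ℝ)
    {π σ : Fin d → ℝ} (hπ : ∀ i, 0 < π i) (hσ : ∀ i, 0 < σ i) :
    sqrtm (timeReversal P π ⊙ timeReversal Q σ)
      = diagonal (fun i => √(π i * σ i))⁻¹ * (sqrtm (P ⊙ Q))ᵀ
          * diagonal (fun i => √(π i * σ i)) := by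
  ext i j
  simp only [sqrtm, hadamard, timeReversal, of_apply, mul_diagonal, diagonal_mul, transpose_apply,
    Pi.inv_apply]
  have hπσ : ∀ k, 0 < π k * σ k := fun k => mul_pos (hπ k) (hσ k)
  rw [show π j * P j i / π i * (σ j * Q j i / σ i) = π j * σ j * (P j i * Q j i) / (π i * σ i) by
      ring,
    Real.sqrt_div' _ (hπσ i).le, Real.sqrt_mul (hπσ j).le]
  ring

theorem distance_timeReversal_general {d : ℕ} (P Pbar : Matrix (Fin d) (Fin d) ℝ)
    (π πbar : Fin d → ℝ)
    (hstat : IsStationaryDist P π) (hstatbar : IsStationaryDist Pbar πbar) :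
    rho (sqrtm (Matrix.hadamard (timeReversal P π) (timeReversal Pbar πbar)))
        = rho (sqrtm (Matrix.hadamard P Pbar))
      ∧ mcDist (timeReversal P π) (timeReversal Pbar πbar) = mcDist P Pbar := by
  have hD : ∀ i, √(π i * πbar i) ≠ 0 := fun i =>
    (Real.sqrt_pos.2 (mul_pos (hstat.1 i) (hstatbar.1 i))).ne'
  have hρ : rho (sqrtm (timeReversal P π ⊙ timeReversal Pbar πbar)) = rho (sqrtm (P ⊙ Pbar)) := by
    rw [sqrtm_hadamard_timeReversal P Pbar hstat.1 hstatbar.1,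
      rho_diagonal_inv_mul_mul_diagonal _ hD, rho_transpose]
  exact ⟨hρ, by rw [mcDist, mcDist, hρ]⟩

/-- The distance is invariant under taking time reversals. -/
theorem distance_timeReversal {d : ℕ} (P Pbar : Matrix (Fin d) (Fin d) ℝ)
    (π πbar : Fin d → ℝ)
    (hP : IsStochastic P) (hPbar : IsStochastic Pbar)
    (hirr : IsIrreducibleMC P) (hirrbar : IsIrreducibleMC Pbar)
    (hstat : IsStationaryDist P π) (hstatbar : IsStationaryDist Pbar πbar) :
    rho (sqrtm (Matrix.hadamard (timeReversal P π) (timeReversal Pbar πbar)))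
        = rho (sqrtm (Matrix.hadamard P Pbar))
      ∧ mcDist (timeReversal P π) (timeReversal Pbar πbar) = mcDist P Pbar :=
  distance_timeReversal_general P Pbar π πbar hstat hstatbar
end

section
/- For all square matrices P, P̄ with nonnegative entries and every k ∈ ℕ, the entrywise inequality (√(P∘P̄))^k(i,j) ≤ (√(P^k ∘ P̄^k))(i,j) holds for all i,j. -/
open Matrix BigOperators Finset

theorem sqrtm_hadamard_mul_sqrtm_hadamard_apply_le {m n p : Type*} [Fintype n]
    {A B : Matrix m n ℝ} {C D : Matrix n p ℝ}
    (hA : ∀ i j, 0 ≤ A i j) (hB : ∀ i j, 0 ≤ B i j) (hC : ∀ i j, 0 ≤ C i j)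
    (hD : ∀ i j, 0 ≤ D i j) (i : m) (j : p) :
    (sqrtm (A ⊙ B) * sqrtm (C ⊙ D)) i j ≤ sqrtm ((A * C) ⊙ (B * D)) i j := by
  have hAC : ∀ l, 0 ≤ A i l * C l j := fun l => mul_nonneg (hA i l) (hC l j)
  have hBD : ∀ l, 0 ≤ B i l * D l j := fun l => mul_nonneg (hB i l) (hD l j)
  calc (sqrtm (A ⊙ B) * sqrtm (C ⊙ D)) i j
      = ∑ l, √(A i l * C l j) * √(B i l * D l j) := by
        simp only [mul_apply, sqrtm, hadamard, of_apply]
        refine sum_congr rfl fun l _ => ?_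
        rw [← Real.sqrt_mul' _ (mul_nonneg (hC l j) (hD l j)),
          ← Real.sqrt_mul' _ (hBD l), mul_mul_mul_comm]
    _ ≤ √(∑ l, A i l * C l j) * √(∑ l, B i l * D l j) :=
        Real.sum_sqrt_mul_sqrt_le _ hAC hBD
    _ = sqrtm ((A * C) ⊙ (B * D)) i j := by
        rw [sqrtm, of_apply, hadamard_apply, mul_apply, mul_apply,
          Real.sqrt_mul (sum_nonneg fun l _ => hAC l)]

/-- Entrywise inequality `(√(P∘P̄))^k(i,j) ≤ √(P^k ∘ P̄^k)(i,j)` for nonnegative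
square matrices. -/
theorem sqrt_hadamard_pow_entrywise_le {n : Type*} [Fintype n] [DecidableEq n]
    (P Pbar : Matrix n n ℝ)
    (hP : ∀ i j, 0 ≤ P i j) (hPbar : ∀ i j, 0 ≤ Pbar i j) (k : ℕ) (i j : n) :
    ((sqrtm (Matrix.hadamard P Pbar)) ^ k) i j
      ≤ (sqrtm (Matrix.hadamard (P ^ k) (Pbar ^ k))) i j := by
  induction k generalizing i j with
  | zero => by_cases h : i = j <;> simp [sqrtm, one_apply, h]
  | succ k ih =>
    calc (sqrtm (P ⊙ Pbar) ^ (k + 1)) i j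
        = ∑ l, sqrtm (P ⊙ Pbar) i l * (sqrtm (P ⊙ Pbar) ^ k) l j := by
          rw [pow_succ', mul_apply]
      _ ≤ ∑ l, sqrtm (P ⊙ Pbar) i l * sqrtm ((P ^ k) ⊙ (Pbar ^ k)) l j :=
          sum_le_sum fun l _ => mul_le_mul_of_nonneg_left (ih l j) (Real.sqrt_nonneg _)
      _ ≤ sqrtm ((P * P ^ k) ⊙ (Pbar * Pbar ^ k)) i j :=
          sqrtm_hadamard_mul_sqrtm_hadamard_apply_le hP hPbar
            (pow_apply_nonneg hP k) (pow_apply_nonneg hPbar k) i j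
      _ = sqrtm ((P ^ (k + 1)) ⊙ (Pbar ^ (k + 1))) i j := by rw [pow_succ', pow_succ']
end

section
/- Let P, P̄ be reversible irreducible Markov chains on [d] with stationary distributions π, π̄ satisfying max_i |π(i)/π̄(i) - 1| ≤ ε for some ε ∈ [0,1). For α ∈ [0,1] let P(α) = αP + (1-α)P̄. Then ρ(√(P ∘ P(α))) ≤ √α + √(1-α) · ((1+ε)/(1-ε))^{1/4} · ρ(√(P∘P̄)). In particular, Distance(P, P(α)) ≥ 1 - √α - 2√((1-α)/(1-ε)) + 2√((1-α)/(1-ε))·Distance(P,P̄). -/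
/-!
Entrywise, `√(P ∘ P(α)) ≤ √α P + √(1-α) √(P ∘ P̄)` by subadditivity of `√`. Conjugation by
`diag(√π)` makes `P` symmetric, and it makes `√(P ∘ P̄)` symmetric up to a further diagonal
conjugation with entries `(π/π̄)^{1/4} ∈ [(1-ε)^{1/4}, (1+ε)^{1/4}]`. The spectral radius is
invariant under conjugation and bounded by the spectral norm, which is monotone on nonnegative
matrices, subadditive, and equal to the spectral radius on symmetric matrices; this gives the
first bound. The second follows from `((1+ε)/(1-ε))^{1/4} ≤ 2/√(1-ε)`.
-/

open Matrix BigOperators Finset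

section SpecNorm

open scoped Matrix.Norms.L2Operator

variable {n : Type*} [Fintype n] [DecidableEq n]

/-- The ℓ²-operator norm, taken over `ℂ` like `rho`. -/
noncomputable def specNorm (X : Matrix n n ℝ) : ℝ :=
  ‖X.map (algebraMap ℝ ℂ)‖

lemma specNorm_nonneg (X : Matrix n n ℝ) : 0 ≤ specNorm X :=
  norm_nonneg _

lemma rho_le_specNorm [Nonempty n] (X : Matrix n n ℝ) : rho X ≤ specNorm X := by
  unfold rho specNorm
  simpa using ENNReal.toReal_mono ENNReal.coe_ne_top
    (spectrum.spectralRadius_le_nnnorm (𝕜 := ℂ) (X.map (algebraMap ℝ ℂ)))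

lemma rho_eq_specNorm_of_isSymm {X : Matrix n n ℝ} (hX : X.IsSymm) : rho X = specNorm X := by
  refine IsSelfAdjoint.toReal_spectralRadius_complex_eq_norm ?_
  ext i j
  simp [hX.apply i j]

lemma specNorm_mono {X Y : Matrix n n ℝ} (hX : ∀ i j, 0 ≤ X i j)
    (hXY : ∀ i j, X i j ≤ Y i j) : specNorm X ≤ specNorm Y := by
  set T := toEuclideanCLM (n := n) (𝕜 := ℂ) (X.map (algebraMap ℝ ℂ))
  rw [specNorm, ← l2_opNorm_toEuclideanCLM]
  refine T.opNorm_le_bound (norm_nonneg _) fun x => ?_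
  -- compare `X x` with `Y |x|` coordinatewise
  let y : EuclideanSpace ℂ n := WithLp.toLp 2 fun j => (‖x j‖ : ℂ)
  have hy : ‖y‖ = ‖x‖ := by simp [EuclideanSpace.norm_eq, y]
  have hcoord (i : n) : ‖T x i‖ ≤ ‖(Y.map (algebraMap ℝ ℂ) *ᵥ y.ofLp) i‖ := by
    have hYx : 0 ≤ ∑ j, Y i j * ‖x j‖ :=
      Finset.sum_nonneg fun j _ => mul_nonneg ((hX i j).trans (hXY i j)) (norm_nonneg _)
    calc ‖T x i‖ = ‖∑ j, (X i j : ℂ) * x j‖ := by simp [T, mulVec, dotProduct]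
      _ ≤ ∑ j, X i j * ‖x j‖ := by
        refine (norm_sum_le _ _).trans_eq (Finset.sum_congr rfl fun j _ => ?_)
        simp [abs_of_nonneg (hX i j)]
      _ ≤ ∑ j, Y i j * ‖x j‖ := by gcongr with j; exact hXY i j
      _ = ‖(Y.map (algebraMap ℝ ℂ) *ᵥ y.ofLp) i‖ := by
        simp only [mulVec, dotProduct, map_apply, y, Complex.coe_algebraMap,
          ← Complex.ofReal_mul, ← Complex.ofReal_sum, Complex.norm_real,
          Real.norm_of_nonneg hYx]
  calc ‖T x‖
        ≤ ‖(EuclideanSpace.equiv n ℂ).symm (Y.map (algebraMap ℝ ℂ) *ᵥ y.ofLp)‖ := by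
        simp only [EuclideanSpace.norm_eq]
        gcongr with i
        exact hcoord i
    _ ≤ ‖Y.map (algebraMap ℝ ℂ)‖ * ‖y‖ := l2_opNorm_mulVec _ _
    _ = specNorm Y * ‖x‖ := by rw [hy]; rfl

lemma specNorm_add_le (X Y : Matrix n n ℝ) : specNorm (X + Y) ≤ specNorm X + specNorm Y := by
  rw [specNorm, Matrix.map_add _ (map_add _)]
  exact norm_add_le _ _

lemma specNorm_smul (r : ℝ) (X : Matrix n n ℝ) : specNorm (r • X) = |r| * specNorm X := by
  rw [specNorm, specNorm, Matrix.map_smul _ _ (fun a => by simp [Algebra.smul_def]), norm_smul,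
    Real.norm_eq_abs]

lemma specNorm_mul_le (X Y : Matrix n n ℝ) : specNorm (X * Y) ≤ specNorm X * specNorm Y := by
  rw [specNorm, Matrix.map_mul]
  exact l2_opNorm_mul _ _

lemma specNorm_diagonal (v : n → ℝ) : specNorm (diagonal v) = ‖v‖ := by
  rw [specNorm, diagonal_map (map_zero _), l2_opNorm_diagonal]
  simp [Pi.norm_def]

end SpecNorm

section Stochastic

attribute [local instance] Matrix.linftyOpNormedRing Matrix.linftyOpNormedAlgebra

lemma rho_le_one_of_stochastic {n : Type*} [Fintype n] [DecidableEq n] [Nonempty n]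
    {P : Matrix n n ℝ} (h0 : ∀ i j, 0 ≤ P i j) (h1 : ∀ i, ∑ j, P i j = 1) :
    rho P ≤ 1 := by
  refine ENNReal.toReal_le_of_le_ofReal zero_le_one
    ((spectrum.spectralRadius_le_nnnorm (𝕜 := ℂ) _).trans ?_)
  rw [ENNReal.ofReal_one, ← ENNReal.coe_one, ENNReal.coe_le_coe, linfty_opNNNorm_def]
  refine Finset.sup_le fun i _ => ?_
  rw [← NNReal.coe_le_coe]
  push_cast
  simp [abs_of_nonneg (h0 i _), h1]

end Stochastic

section DiagConj

variable {n : Type*} [Fintype n] [DecidableEq n]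

noncomputable def diagConj (f : n → ℝ) (X : Matrix n n ℝ) : Matrix n n ℝ :=
  diagonal f * X * diagonal f⁻¹

@[simp]
lemma diagConj_apply (f : n → ℝ) (X : Matrix n n ℝ) (i j : n) :
    diagConj f X i j = f i * X i j * (f j)⁻¹ := by
  simp [diagConj]

lemma diagConj_mul (f g : n → ℝ) (X : Matrix n n ℝ) :
    diagConj (f * g) X = diagConj f (diagConj g X) := by
  ext i j
  simp only [diagConj_apply, Pi.mul_apply, mul_inv]
  ring

lemma diagConj_add (f : n → ℝ) (X Y : Matrix n n ℝ) :
    diagConj f (X + Y) = diagConj f X + diagConj f Y := by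
  simp only [diagConj, Matrix.mul_add, Matrix.add_mul]

lemma diagConj_smul (f : n → ℝ) (r : ℝ) (X : Matrix n n ℝ) :
    diagConj f (r • X) = r • diagConj f X := by
  simp only [diagConj, Matrix.mul_smul, Matrix.smul_mul]

lemma rho_diagConj {f : n → ℝ} (hf : ∀ i, f i ≠ 0) (X : Matrix n n ℝ) :
    rho (diagConj f X) = rho X := by
  let u : (Matrix n n ℝ)ˣ :=
    { val := diagonal f
      inv := diagonal f⁻¹
      val_inv := by simp [diagonal_mul_diagonal, hf]
      inv_val := by simp [diagonal_mul_diagonal, hf] }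
  let v := Units.map ((algebraMap ℝ ℂ).mapMatrix (m := n)).toMonoidHom u
  have hv : (diagConj f X).map (algebraMap ℝ ℂ) =
      (v : Matrix n n ℂ) * X.map (algebraMap ℝ ℂ) * (↑v⁻¹ : Matrix n n ℂ) := by
    ext i j
    simp [diagConj, u, v]
  unfold rho spectralRadius
  rw [hv, spectrum.units_conjugate]

lemma specNorm_diagConj_le [Nonempty n] {f : n → ℝ} {lo hi : ℝ} (hlo : 0 < lo)
    (hf : ∀ i, lo ≤ f i ∧ f i ≤ hi) (X : Matrix n n ℝ) :
    specNorm (diagConj f X) ≤ hi / lo * specNorm X := by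
  have hf_pos i : 0 < f i := hlo.trans_le (hf i).1
  have hhi : 0 ≤ hi := (hf_pos (Classical.arbitrary n)).le.trans (hf _).2
  have hX := specNorm_nonneg X
  have hnorm : ‖f‖ ≤ hi := (pi_norm_le_iff_of_nonneg hhi).mpr fun i => by
    rw [Real.norm_of_nonneg (hf_pos i).le]
    exact (hf i).2
  have hnorm_inv : ‖f⁻¹‖ ≤ lo⁻¹ :=
    (pi_norm_le_iff_of_nonneg (inv_nonneg.mpr hlo.le)).mpr fun i => by
      rw [Pi.inv_apply, Real.norm_of_nonneg (inv_nonneg.mpr (hf_pos i).le)]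
      exact inv_anti₀ hlo (hf i).1
  calc specNorm (diagConj f X)
      ≤ specNorm (diagonal f) * specNorm X * specNorm (diagonal f⁻¹) :=
        (specNorm_mul_le _ _).trans (by gcongr; exacts [specNorm_nonneg _, specNorm_mul_le _ _])
    _ ≤ hi * specNorm X * lo⁻¹ := by
        rw [specNorm_diagonal, specNorm_diagonal]
        gcongr
    _ = hi / lo * specNorm X := by ring

lemma rho_le_specNorm_diagConj_of_le [Nonempty n] {A B : Matrix n n ℝ} {f : n → ℝ}
    (hf : ∀ i, 0 < f i) (hA : ∀ i j, 0 ≤ A i j) (hAB : ∀ i j, A i j ≤ B i j) :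
    rho A ≤ specNorm (diagConj f B) := by
  rw [← rho_diagConj (fun i => (hf i).ne') A]
  refine (rho_le_specNorm _).trans (specNorm_mono (fun i j => ?_) (fun i j => ?_)) <;>
    simp only [diagConj_apply]
  · exact mul_nonneg (mul_nonneg (hf i).le (hA i j)) (inv_nonneg.mpr (hf j).le)
  · exact mul_le_mul_of_nonneg_right (mul_le_mul_of_nonneg_left (hAB i j) (hf i).le)
      (inv_nonneg.mpr (hf j).le)

end DiagConj

-- Valid for all reals, since `√` vanishes on negatives.
lemma Real.sqrt_add_le_add_sqrt (x y : ℝ) : √(x + y) ≤ √x + √y := by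
  rw [Real.sqrt_le_left (by positivity)]
  nlinarith [Real.sq_sqrt' (x := x), Real.sq_sqrt' (x := y), le_max_left x 0, le_max_left y 0,
    mul_nonneg (Real.sqrt_nonneg x) (Real.sqrt_nonneg y)]

lemma Real.sqrt_sqrt_eq_rpow {x : ℝ} (hx : 0 ≤ x) : √√x = x ^ ((1 : ℝ) / 4) := by
  rw [Real.sqrt_eq_rpow, Real.sqrt_eq_rpow, ← Real.rpow_mul hx]
  norm_num

lemma Real.sqrt_sqrt_div_mul_sqrt_sqrt_mul {a b : ℝ} (ha : 0 ≤ a) (hb : 0 < b) :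
    √√(a / b) * √√(a * b) = √a := by
  have h : a / b * (a * b) = a ^ 2 := by field_simp
  rw [← Real.sqrt_mul (by positivity), ← Real.sqrt_mul (by positivity), h, Real.sqrt_sq ha]

lemma sqrtm_hadamard_convex_le {m n : Type*} {P : Matrix m n ℝ} (hP : ∀ i j, 0 ≤ P i j)
    (Q : Matrix m n ℝ) {α : ℝ} (hα0 : 0 ≤ α) (hα1 : α ≤ 1) (i : m) (j : n) :
    sqrtm (hadamard P (α • P + (1 - α) • Q)) i j ≤
      (√α • P + √(1 - α) • sqrtm (hadamard P Q)) i j := by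
  have hsplit : P i j * (α * P i j + (1 - α) * Q i j) =
      α * P i j ^ 2 + (1 - α) * (P i j * Q i j) := by
    ring
  simp only [sqrtm, of_apply, hadamard_apply, Matrix.add_apply, Matrix.smul_apply, smul_eq_mul,
    hsplit]
  calc √(α * P i j ^ 2 + (1 - α) * (P i j * Q i j))
      ≤ √(α * P i j ^ 2) + √((1 - α) * (P i j * Q i j)) := Real.sqrt_add_le_add_sqrt _ _
    _ = √α * P i j + √(1 - α) * √(P i j * Q i j) := by
        rw [Real.sqrt_mul hα0, Real.sqrt_mul (by linarith), Real.sqrt_sq (hP i j)]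

namespace IsReversible

variable {d : ℕ} {P Q : Matrix (Fin d) (Fin d) ℝ} {π σ : Fin d → ℝ}

lemma isSymm_diagConj_sqrt (hP : IsReversible P π) (hπ : ∀ i, 0 < π i) :
    (diagConj (fun i => √(π i)) P).IsSymm := by
  refine IsSymm.ext fun i j => ?_
  have hi := Real.sqrt_pos.mpr (hπ i)
  have hj := Real.sqrt_pos.mpr (hπ j)
  simp only [diagConj_apply]
  field_simp
  linear_combination (hP i j).symm + P j i * Real.sq_sqrt (hπ j).le -
    P i j * Real.sq_sqrt (hπ i).le

lemma sqrtm_hadamard (hP : IsReversible P π) (hQ : IsReversible Q σ) (hπ : ∀ i, 0 ≤ π i)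
    (hσ : ∀ i, 0 ≤ σ i) : IsReversible (sqrtm (hadamard P Q)) fun i => √(π i * σ i) := by
  intro i j
  simp only [sqrtm, of_apply, hadamard_apply]
  rw [← Real.sqrt_mul (mul_nonneg (hπ i) (hσ i)),
    ← Real.sqrt_mul (mul_nonneg (hπ j) (hσ j))]
  congr 1
  calc π i * σ i * (P i j * Q i j) = (π i * P i j) * (σ i * Q i j) := by ring
    _ = (π j * P j i) * (σ j * Q j i) := by rw [hP i j, hQ i j]
    _ = π j * σ j * (P j i * Q j i) := by ring

end IsReversible

theorem rho_sqrtm_hadamard_convex_le {d : ℕ} [NeZero d] {P Pbar : Matrix (Fin d) (Fin d) ℝ}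
    {π πbar : Fin d → ℝ} (hP : IsStochastic P) (hrev : IsReversible P π)
    (hrevbar : IsReversible Pbar πbar) (hπ : ∀ i, 0 < π i) (hπbar : ∀ i, 0 < πbar i)
    {lo hi : ℝ} (hlo : 0 < lo) (hratio : ∀ i, lo ≤ π i / πbar i ∧ π i / πbar i ≤ hi)
    {α : ℝ} (hα0 : 0 ≤ α) (hα1 : α ≤ 1) :
    rho (sqrtm (hadamard P (α • P + (1 - α) • Pbar))) ≤
      √α + √(1 - α) * (hi / lo) ^ ((1 : ℝ) / 4) * rho (sqrtm (hadamard P Pbar)) := by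
  set M := sqrtm (hadamard P Pbar)
  set c : Fin d → ℝ := fun i => √(π i)
  set e : Fin d → ℝ := fun i => √√(π i * πbar i)
  set g : Fin d → ℝ := fun i => √√(π i / πbar i)
  have hc : ∀ i, 0 < c i := fun i => Real.sqrt_pos.mpr (hπ i)
  have hce : c = g * e := funext fun i =>
    (Real.sqrt_sqrt_div_mul_sqrt_sqrt_mul (hπ i).le (hπbar i)).symm
  have hP_symm : specNorm (diagConj c P) = rho P := by
    rw [← rho_eq_specNorm_of_isSymm (hrev.isSymm_diagConj_sqrt hπ),
      rho_diagConj fun i => (hc i).ne']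
  have hM_symm : specNorm (diagConj e M) = rho M := by
    have hw (i) : 0 < √(π i * πbar i) := Real.sqrt_pos.mpr (mul_pos (hπ i) (hπbar i))
    have hM_rev := hrev.sqrtm_hadamard hrevbar (fun i => (hπ i).le) fun i => (hπbar i).le
    rw [← rho_eq_specNorm_of_isSymm (hM_rev.isSymm_diagConj_sqrt hw),
      rho_diagConj fun i => (Real.sqrt_pos.mpr (hw i)).ne']
  have hM : specNorm (diagConj c M) ≤ (hi / lo) ^ ((1 : ℝ) / 4) * rho M := by
    have hhi : 0 < hi := hlo.trans_le ((hratio 0).1.trans (hratio 0).2)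
    rw [hce, diagConj_mul, ← hM_symm, ← Real.sqrt_sqrt_eq_rpow (by positivity),
      Real.sqrt_div' _ hlo.le, Real.sqrt_div' _ (Real.sqrt_nonneg _)]
    refine specNorm_diagConj_le (by positivity) (fun i => ⟨?_, ?_⟩) _
    · exact Real.sqrt_le_sqrt (Real.sqrt_le_sqrt (hratio i).1)
    · exact Real.sqrt_le_sqrt (Real.sqrt_le_sqrt (hratio i).2)
  calc rho (sqrtm (hadamard P (α • P + (1 - α) • Pbar)))
      ≤ specNorm (diagConj c (√α • P + √(1 - α) • M)) :=
        rho_le_specNorm_diagConj_of_le hc (fun _ _ => Real.sqrt_nonneg _)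
          (sqrtm_hadamard_convex_le hP.1 Pbar hα0 hα1)
    _ ≤ √α * specNorm (diagConj c P) + √(1 - α) * specNorm (diagConj c M) := by
        rw [diagConj_add, diagConj_smul, diagConj_smul]
        refine (specNorm_add_le _ _).trans_eq ?_
        rw [specNorm_smul, specNorm_smul, abs_of_nonneg (Real.sqrt_nonneg _),
          abs_of_nonneg (Real.sqrt_nonneg _)]
    _ ≤ √α * 1 + √(1 - α) * ((hi / lo) ^ ((1 : ℝ) / 4) * rho M) := by
        rw [hP_symm]
        gcongr
        exact rho_le_one_of_stochastic hP.1 hP.2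
    _ = √α + √(1 - α) * (hi / lo) ^ ((1 : ℝ) / 4) * rho M := by ring

lemma one_add_div_one_sub_rpow_quarter_le {ε : ℝ} (hε0 : 0 ≤ ε) (hε1 : ε < 1) :
    ((1 + ε) / (1 - ε)) ^ ((1 : ℝ) / 4) ≤ 2 / √(1 - ε) := by
  have h : 0 < 1 - ε := sub_pos.mpr hε1
  rw [show (1 : ℝ) / 4 = (4 : ℝ)⁻¹ by norm_num,
    Real.rpow_inv_le_iff_of_pos (by positivity) (by positivity) (by norm_num),
    show (4 : ℝ) = ((4 : ℕ) : ℝ) by norm_num, Real.rpow_natCast, div_pow,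
    show √(1 - ε) ^ 4 = (1 - ε) ^ 2 by rw [show 4 = 2 * 2 by rfl, pow_mul, Real.sq_sqrt h.le],
    div_le_div_iff₀ h (by positivity)]
  nlinarith

theorem distance_convex_combination_general {d : ℕ} (P Pbar : Matrix (Fin d) (Fin d) ℝ)
    (π πbar : Fin d → ℝ)
    (hP : IsStochastic P)
    (hstat : IsStationaryMC P π)
    (hrev : IsReversible P π) (hrevbar : IsReversible Pbar πbar)
    (ε : ℝ) (hε : ε ∈ Set.Ico (0 : ℝ) 1)
    (hclose : ∀ i, |π i / πbar i - 1| ≤ ε)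
    (α : ℝ) (hα : α ∈ Set.Icc (0 : ℝ) 1) :
    rho (sqrtm (Matrix.hadamard P (α • P + (1 - α) • Pbar)))
        ≤ Real.sqrt α
          + Real.sqrt (1 - α) * ((1 + ε) / (1 - ε)) ^ ((1 : ℝ) / 4)
            * rho (sqrtm (Matrix.hadamard P Pbar))
      ∧ 1 - Real.sqrt α - 2 * Real.sqrt ((1 - α) / (1 - ε))
          + 2 * Real.sqrt ((1 - α) / (1 - ε)) * mcDist P Pbar
        ≤ mcDist P (α • P + (1 - α) • Pbar) := by
  obtain ⟨hε0, hε1⟩ := hε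
  obtain ⟨hα0, hα1⟩ := hα
  have hratio : ∀ i, 1 - ε ≤ π i / πbar i ∧ π i / πbar i ≤ 1 + ε := fun i => by
    constructor <;> linarith [abs_le.mp (hclose i)]
  have hπbar : ∀ i, 0 < πbar i := fun i =>
    (div_pos_iff_of_pos_left (hstat.1 i)).mp ((sub_pos.mpr hε1).trans_le (hratio i).1)
  have : NeZero d := ⟨by rintro rfl; simpa using hstat.2.1⟩
  have hρ := rho_sqrtm_hadamard_convex_le hP hrev hrevbar hstat.1 hπbar (sub_pos.mpr hε1) hratio
    hα0 hα1
  refine ⟨hρ, ?_⟩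
  have hcoef :
      √(1 - α) * ((1 + ε) / (1 - ε)) ^ ((1 : ℝ) / 4) ≤ 2 * √((1 - α) / (1 - ε)) :=
    calc _ ≤ √(1 - α) * (2 / √(1 - ε)) := by
          gcongr
          exact one_add_div_one_sub_rpow_quarter_le hε0 hε1
      _ = 2 * √((1 - α) / (1 - ε)) := by rw [Real.sqrt_div' _ (sub_pos.mpr hε1).le]; ring
  have hρM : 0 ≤ rho (sqrtm (hadamard P Pbar)) := ENNReal.toReal_nonneg
  rw [mcDist, mcDist]
  linarith [mul_le_mul_of_nonneg_right hcoef hρM]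

/-- Distance to a convex combination `P(α) = αP + (1-α)P̄`, when the stationary
distributions are multiplicatively `ε`-close. -/
theorem distance_convex_combination {d : ℕ} (P Pbar : Matrix (Fin d) (Fin d) ℝ)
    (π πbar : Fin d → ℝ)
    (hP : IsStochastic P) (hPbar : IsStochastic Pbar)
    (hirr : IsIrreducibleMC P) (hirrbar : IsIrreducibleMC Pbar)
    (hstat : IsStationaryMC P π) (hstatbar : IsStationaryMC Pbar πbar)
    (hrev : IsReversible P π) (hrevbar : IsReversible Pbar πbar)
    (ε : ℝ) (hε : ε ∈ Set.Ico (0 : ℝ) 1)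
    (hclose : ∀ i, |π i / πbar i - 1| ≤ ε)
    (α : ℝ) (hα : α ∈ Set.Icc (0 : ℝ) 1) :
    rho (sqrtm (Matrix.hadamard P (α • P + (1 - α) • Pbar)))
        ≤ Real.sqrt α
          + Real.sqrt (1 - α) * ((1 + ε) / (1 - ε)) ^ ((1 : ℝ) / 4)
            * rho (sqrtm (Matrix.hadamard P Pbar))
      ∧ 1 - Real.sqrt α - 2 * Real.sqrt ((1 - α) / (1 - ε))
          + 2 * Real.sqrt ((1 - α) / (1 - ε)) * mcDist P Pbar
        ≤ mcDist P (α • P + (1 - α) • Pbar) :=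
  distance_convex_combination_general P Pbar π πbar hP hstat hrev hrevbar ε hε hclose α hα
end

section
/- Let P, P̄ be reversible irreducible Markov chains on [d] with stationary distributions π, π̄, let Q̄ = diag(π̄)P̄ and R = diag(π̄)P, and let S ⊆ [d] with π̄(S) > 0. Then ρ(√(P∘P̄)) ≥ (1 - ε/2) Σ_{i,j∈S} √(R(i,j)/π̄(S)) √(Q̄(i,j)/π̄(S)), provided max_i |π(i)/π̄(i) - 1| ≤ ε/2. -/
open Matrix BigOperators Finset

/-!
`M = √(P ∘ P̄)` satisfies detailed balance with respect to `w = √(π π̄)`, so it is self-adjoint in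
`ℓ²(w)` and its largest eigenvalue dominates the Rayleigh quotient `⟨1_S, M 1_S⟩_w / ⟨1_S, 1_S⟩_w`.
Comparing `w` with `π̄` through `|π / π̄ - 1| ≤ ε / 2` loses at most the factor
`√(1 - ε/2) / √(1 + ε/2) ≥ 1 - ε/2`.
-/

theorem mul_le_and_le_mul_of_abs_div_sub_one_le {p q a : ℝ} (hq : 0 < q) (h : |p / q - 1| ≤ a) :
    (1 - a) * q ≤ p ∧ p ≤ (1 + a) * q := by
  rw [abs_le] at h
  constructor
  · rw [← le_div_iff₀ hq]; linarith
  · rw [← div_le_iff₀ hq]; linarith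

theorem Real.sqrt_div_mul_sqrt_div (x y : ℝ) {z : ℝ} (hz : 0 ≤ z) :
    √(x / z) * √(y / z) = √x * √y / z := by
  rw [Real.sqrt_div' _ hz, Real.sqrt_div' _ hz, div_mul_div_comm, Real.mul_self_sqrt hz]

theorem Real.sqrt_mul_le_sqrt_mul {p q c : ℝ} (hq : 0 ≤ q) (h : p ≤ c * q) :
    √(p * q) ≤ √c * q :=
  calc √(p * q) ≤ √(c * (q * q)) := Real.sqrt_le_sqrt (by nlinarith)
    _ = √c * q := by rw [Real.sqrt_mul' _ (mul_self_nonneg q), Real.sqrt_mul_self hq]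

theorem Real.sqrt_mul_sqrt_mul_sqrt_le {c p q x y : ℝ} (hc : 0 ≤ c) (hq : 0 ≤ q) (hx : 0 ≤ x)
    (hy : 0 ≤ y) (h : c * q ≤ p) : √c * (√(q * x) * √(q * y)) ≤ √(p * x * (q * y)) := by
  rw [← Real.sqrt_mul (mul_nonneg hq hx), ← Real.sqrt_mul hc, ← mul_assoc]
  refine Real.sqrt_le_sqrt (mul_le_mul_of_nonneg_right ?_ (mul_nonneg hq hy))
  rw [← mul_assoc]
  exact mul_le_mul_of_nonneg_right h hx

/-- Since `(1 - a) (1 + a) ≤ 1`, the factor `√(1 - a) / √(1 + a)` is at least `1 - a`. -/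
theorem one_sub_mul_le_of_sqrt_one_sub_mul_le {a b r z : ℝ} (ha : 0 ≤ 1 - a) (hr : 0 ≤ r)
    (hz : 0 ≤ z) (h : √(1 - a) * b ≤ r * (√(1 + a) * z)) : (1 - a) * b ≤ r * z :=
  calc (1 - a) * b = √(1 - a) * (√(1 - a) * b) := by rw [← mul_assoc, Real.mul_self_sqrt ha]
    _ ≤ √(1 - a) * (r * (√(1 + a) * z)) := mul_le_mul_of_nonneg_left h (Real.sqrt_nonneg _)
    _ = √((1 - a) * (1 + a)) * (r * z) := by rw [Real.sqrt_mul ha]; ring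
    _ ≤ r * z := mul_le_of_le_one_left (mul_nonneg hr hz)
      (Real.sqrt_le_one.mpr (by nlinarith [sq_nonneg a]))

namespace Matrix

variable {n : Type*} [Fintype n] [DecidableEq n]

theorem map_mem_spectrum_map {K L : Type*} [Field K] [CommRing L] [Nontrivial L] (f : K →+* L)
    {A : Matrix n n K} {μ : K} (h : μ ∈ spectrum K A) : f μ ∈ spectrum L (A.map f) := by
  rw [mem_spectrum_iff_isRoot_charpoly] at h
  exact mem_spectrum_of_isRoot_charpoly (by rw [charpoly_map]; exact h.map)

theorem spectralRadius_ne_top {K : Type*} [NormedField K] (A : Matrix n n K) :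
    spectralRadius K A ≠ ⊤ := by
  rw [spectralRadius, iSup_subtype']
  exact iSup_ne_top fun _ => ENNReal.coe_ne_top

open scoped MatrixOrder in
theorem IsHermitian.exists_mem_spectrum_forall_dotProduct_mulVec_le [Nonempty n]
    {A : Matrix n n ℝ} (hA : A.IsHermitian) :
    ∃ μ ∈ spectrum ℝ A, ∀ v : n → ℝ, v ⬝ᵥ (A *ᵥ v) ≤ μ * (v ⬝ᵥ v) := by
  obtain ⟨μ, hμ, hmax⟩ := Set.exists_max_image _ id A.finite_spectrum
    (ContinuousFunctionalCalculus.spectrum_nonempty A hA.isSelfAdjoint)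
  have hle : A ≤ algebraMap ℝ _ μ := le_algebraMap_of_spectrum_le hmax hA.isSelfAdjoint
  refine ⟨μ, hμ, fun v => ?_⟩
  have := (le_iff.mp hle).dotProduct_mulVec_nonneg v
  rw [star_trivial, sub_mulVec, dotProduct_sub, algebraMap_eq_diagonal] at this
  simpa [Pi.algebraMap_def, mulVec_diagonal, dotProduct, Finset.mul_sum, mul_left_comm] using this

/-- Conjugating by `diag(√w)` turns `M` into a symmetric matrix with the same spectrum. -/
theorem exists_mem_spectrum_forall_weighted_le [Nonempty n] {M : Matrix n n ℝ} {w : n → ℝ}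
    (hw : ∀ i, 0 < w i) (hM : ∀ i j, w i * M i j = w j * M j i) :
    ∃ μ ∈ spectrum ℝ M, ∀ x : n → ℝ,
      ∑ i, ∑ j, w i * x i * M i j * x j ≤ μ * ∑ i, w i * x i ^ 2 := by
  set s : n → ℝ := fun i => √(w i)
  have hs : ∀ i, s i ≠ 0 := fun i => (Real.sqrt_pos.mpr (hw i)).ne'
  have hss : ∀ i, s i * s i = w i := fun i => Real.mul_self_sqrt (hw i).le
  let u : (Matrix n n ℝ)ˣ := ⟨diagonal s, diagonal s⁻¹, by simp [hs], by simp [hs]⟩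
  have hN : ∀ i j, (u * M * u⁻¹ : Matrix n n ℝ) i j = s i * M i j / s j := by
    intro i j
    simp [u, div_eq_mul_inv]
  have hsymm : (u * M * u⁻¹ : Matrix n n ℝ).IsHermitian := by
    ext i j
    rw [conjTranspose_apply, star_trivial, hN, hN, div_eq_div_iff (hs i) (hs j)]
    linear_combination M j i * hss j - M i j * hss i + hM j i
  obtain ⟨μ, hμ, hray⟩ := hsymm.exists_mem_spectrum_forall_dotProduct_mulVec_le
  refine ⟨μ, by rwa [spectrum.units_conjugate] at hμ, fun x => ?_⟩
  convert hray (s * x) using 2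
  · simp only [dotProduct, mulVec, hN, Pi.mul_apply, Finset.mul_sum]
    refine Finset.sum_congr rfl fun i _ => Finset.sum_congr rfl fun j _ => ?_
    rw [← hss i]
    field_simp [hs j]
  · refine Finset.sum_congr rfl fun i _ => ?_
    rw [Pi.mul_apply, ← hss i]
    ring

end Matrix

section SpectralRadius

variable {n : Type*} [Fintype n] [DecidableEq n]

theorem rho_nonneg (A : Matrix n n ℝ) : 0 ≤ rho A :=
  ENNReal.toReal_nonneg

theorem le_rho_of_mem_spectrum {A : Matrix n n ℝ} {μ : ℝ} (h : μ ∈ spectrum ℝ A) :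
    μ ≤ rho A := by
  have hC : (μ : ℂ) ∈ spectrum ℂ (A.map (algebraMap ℝ ℂ)) := Matrix.map_mem_spectrum_map _ h
  calc μ ≤ ‖(μ : ℂ)‖₊ := by rw [coe_nnnorm, Complex.norm_real]; exact le_abs_self μ
    _ ≤ rho A := ENNReal.toReal_mono (Matrix.spectralRadius_ne_top _)
      (le_iSup₂ (f := fun k _ => (‖k‖₊ : ENNReal)) _ hC)

theorem sum_weighted_le_rho_mul_sum [Nonempty n] {M : Matrix n n ℝ} {w : n → ℝ}
    (hw : ∀ i, 0 < w i) (hM : ∀ i j, w i * M i j = w j * M j i) (S : Finset n) :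
    ∑ i ∈ S, ∑ j ∈ S, w i * M i j ≤ rho M * ∑ i ∈ S, w i := by
  obtain ⟨μ, hμ, hray⟩ := Matrix.exists_mem_spectrum_forall_weighted_le hw hM
  have hS := hray fun i => if i ∈ S then 1 else 0
  simp only [mul_ite, mul_one, mul_zero, ite_mul, zero_mul, Finset.sum_ite_mem, Finset.univ_inter,
    Finset.sum_ite_irrel, Finset.sum_const_zero, ite_pow, one_pow, ne_eq, OfNat.ofNat_ne_zero,
    not_false_eq_true, zero_pow] at hS
  exact hS.trans (mul_le_mul_of_nonneg_right (le_rho_of_mem_spectrum hμ)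
    (Finset.sum_nonneg fun i _ => (hw i).le))

end SpectralRadius

theorem sqrt_mul_sqrtm_hadamard {m n : Type*} (P Q : Matrix m n ℝ) {p q : ℝ} (hpq : 0 ≤ p * q)
    (i : m) (j : n) : √(p * q) * sqrtm (hadamard P Q) i j = √(p * P i j * (q * Q i j)) := by
  rw [sqrtm, of_apply, hadamard_apply, ← Real.sqrt_mul hpq]
  ring_nf

theorem IsReversible.sqrt_mul_sqrtm_hadamard_symm {d : ℕ} {P Q : Matrix (Fin d) (Fin d) ℝ}
    {π σ : Fin d → ℝ} (hP : IsReversible P π) (hQ : IsReversible Q σ)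
    (hπσ : ∀ i, 0 ≤ π i * σ i) (i j : Fin d) :
    √(π i * σ i) * sqrtm (hadamard P Q) i j = √(π j * σ j) * sqrtm (hadamard P Q) j i := by
  rw [sqrt_mul_sqrtm_hadamard _ _ (hπσ i), sqrt_mul_sqrtm_hadamard _ _ (hπσ j), hP, hQ]

theorem rho_lower_bound_component_general {d : ℕ} (P Pbar : Matrix (Fin d) (Fin d) ℝ)
    (π πbar : Fin d → ℝ)
    (hP : IsStochastic P) (hPbar : IsStochastic Pbar)
    (hstat : IsStationaryDist P π) (hstatbar : IsStationaryDist Pbar πbar)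
    (hrev : IsReversible P π) (hrevbar : IsReversible Pbar πbar)
    (S : Finset (Fin d)) (hS : 0 < ∑ i ∈ S, πbar i)
    (ε : ℝ) (hε : ε ∈ Set.Ioo (0 : ℝ) 1)
    (hclose : ∀ i, |π i / πbar i - 1| ≤ ε / 2) :
    (1 - ε / 2) *
        ∑ i ∈ S, ∑ j ∈ S,
          Real.sqrt (πbar i * P i j / ∑ k ∈ S, πbar k)
            * Real.sqrt (πbar i * Pbar i j / ∑ k ∈ S, πbar k)
      ≤ rho (sqrtm (Matrix.hadamard P Pbar)) := by
  set B := ∑ i ∈ S, ∑ j ∈ S, √(πbar i * P i j) * √(πbar i * Pbar i j)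
  have ha : 0 ≤ 1 - ε / 2 := by linarith [hε.2]
  have hbounds i := mul_le_and_le_mul_of_abs_div_sub_one_le (hstatbar.1 i) (hclose i)
  have hw i : 0 < π i * πbar i := mul_pos (hstat.1 i) (hstatbar.1 i)
  obtain ⟨i₀, -⟩ := Finset.nonempty_of_sum_ne_zero hS.ne'
  have : Nonempty (Fin d) := ⟨i₀⟩
  have hray := sum_weighted_le_rho_mul_sum (fun i => Real.sqrt_pos.mpr (hw i))
    (hrev.sqrt_mul_sqrtm_hadamard_symm hrevbar fun i => (hw i).le) S
  have hlower : √(1 - ε / 2) * B ≤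
      ∑ i ∈ S, ∑ j ∈ S, √(π i * πbar i) * sqrtm (hadamard P Pbar) i j := by
    simp_rw [B, Finset.mul_sum, sqrt_mul_sqrtm_hadamard _ _ (hw _).le]
    gcongr with i _ j _
    exact Real.sqrt_mul_sqrt_mul_sqrt_le ha (hstatbar.1 i).le (hP.1 i j) (hPbar.1 i j)
      (hbounds i).1
  have hupper : ∑ i ∈ S, √(π i * πbar i) ≤ √(1 + ε / 2) * ∑ k ∈ S, πbar k := by
    rw [Finset.mul_sum]
    gcongr with i _
    exact Real.sqrt_mul_le_sqrt_mul (hstatbar.1 i).le (hbounds i).2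
  simp_rw [Real.sqrt_div_mul_sqrt_div _ _ hS.le, ← Finset.sum_div, ← mul_div_assoc,
    div_le_iff₀ hS]
  exact one_sub_mul_le_of_sqrt_one_sub_mul_le ha (rho_nonneg _) hS.le
    (hlower.trans (hray.trans (mul_le_mul_of_nonneg_left hupper (rho_nonneg _))))

/-- Rayleigh-quotient lower bound on `ρ(√(P∘P̄))` in terms of the transitions
inside a component `S`, where `R = diag(π̄)P` and `Q̄ = diag(π̄)P̄`. -/
theorem rho_lower_bound_component {d : ℕ} (P Pbar : Matrix (Fin d) (Fin d) ℝ)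
    (π πbar : Fin d → ℝ)
    (hP : IsStochastic P) (hPbar : IsStochastic Pbar)
    (hirr : IsIrreducibleMC P) (hirrbar : IsIrreducibleMC Pbar)
    (hstat : IsStationaryDist P π) (hstatbar : IsStationaryDist Pbar πbar)
    (hrev : IsReversible P π) (hrevbar : IsReversible Pbar πbar)
    (S : Finset (Fin d)) (hS : 0 < ∑ i ∈ S, πbar i)
    (ε : ℝ) (hε : ε ∈ Set.Ioo (0 : ℝ) 1)
    (hclose : ∀ i, |π i / πbar i - 1| ≤ ε / 2) :
    (1 - ε / 2) *
        ∑ i ∈ S, ∑ j ∈ S,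
          Real.sqrt (πbar i * P i j / ∑ k ∈ S, πbar k)
            * Real.sqrt (πbar i * Pbar i j / ∑ k ∈ S, πbar k)
      ≤ rho (sqrtm (Matrix.hadamard P Pbar)) :=
  rho_lower_bound_component_general P Pbar π πbar hP hPbar hstat hstatbar hrev hrevbar S hS ε hε
    hclose
end

section
/- Let P, P̄ be irreducible reversible Markov chains on [d] with stationary distributions π, π̄, let ε ∈ (0,1) with Distance(P,P̄) ≥ ε and max_i |π(i)/π̄(i) - 1| ≤ ε/2. Let S ⊆ [d] with Σ_{i,j∈S} Distribution(S,P̄,π̄)(i,j) ≥ 1 - ε/16. Then d²_Hel(Distribution(S,P,π̄), Distribution(S,P̄,π̄)) ≥ ε²/128. -/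
open Matrix BigOperators Finset

/-- The probability of the pair `(i,j)` under `Distribution(S, P, ν)`. -/
noncomputable def distributionPair {d : ℕ} (S : Finset (Fin d))
    (P : Matrix (Fin d) (Fin d) ℝ) (ν : Fin d → ℝ) (i j : Fin d) : ℝ :=
  ν i * P i j / ∑ k ∈ S, ν k

/-- The probability of the merged symbol `∞` under `Distribution(S, P, ν)`. -/
noncomputable def distributionInfty {d : ℕ} (S : Finset (Fin d))
    (P : Matrix (Fin d) (Fin d) ℝ) (ν : Fin d → ℝ) : ℝ :=
  1 - ∑ i ∈ S, ∑ j ∈ S, distributionPair S P ν i j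

/-!
Put `M = √(P ∘ P̄)` and `w i = √(π i π̄ i)`. Reversibility of both chains makes `w i M i j`
symmetric, so `M` is similar to a symmetric matrix and its `w`-weighted quadratic form on the
indicator of `S` is at most `ρ(M) w(S) ≤ (1 - ε) w(S)`. As `w` is within a factor `√(1 ± ε/2)` of
`π̄`, the Bhattacharyya coefficient of the two distributions on `S × S` is at most `1 - ε/2`.
Cauchy–Schwarz and the mass condition on `S` bound the term at `∞` by half of the remaining
gap `1 - (coefficient on S × S)`, which leaves at least `ε/4 ≥ ε²/128`.
-/

open scoped RealInnerProductSpace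

section Spectral

variable {n : Type*} [Fintype n] [DecidableEq n]

lemma spectralRadius_le_spectralRadius_map_complex (M : Matrix n n ℝ) :
    spectralRadius ℝ M ≤ spectralRadius ℂ (M.map (algebraMap ℝ ℂ)) := by
  refine iSup₂_le fun r hr => ?_
  have hroot : (M.map (algebraMap ℝ ℂ)).charpoly.IsRoot (algebraMap ℝ ℂ r) := by
    rw [Matrix.charpoly_map]
    exact ((Matrix.mem_spectrum_iff_isRoot_charpoly).1 hr).map
  calc (‖r‖₊ : ENNReal) = ‖algebraMap ℝ ℂ r‖₊ := by simp
    _ ≤ spectralRadius ℂ (M.map (algebraMap ℝ ℂ)) :=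
      le_iSup₂ (f := fun z (_ : z ∈ spectrum ℂ _) => (‖z‖₊ : ENNReal)) _
        ((Matrix.mem_spectrum_iff_isRoot_charpoly).2 hroot)

lemma toReal_spectralRadius_le_rho (M : Matrix n n ℝ) :
    (spectralRadius ℝ M).toReal ≤ rho M := by
  have hfin : spectralRadius ℂ (M.map (algebraMap ℝ ℂ)) ≠ ⊤ := by
    obtain ⟨B, hB⟩ := ((Matrix.finite_spectrum (M.map (algebraMap ℝ ℂ))).image (‖·‖₊)).bddAbove
    exact ne_top_of_le_ne_top ENNReal.coe_ne_top
      (iSup₂_le fun z hz => ENNReal.coe_le_coe.2 (hB ⟨z, hz, rfl⟩))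
  exact ENNReal.toReal_mono hfin (spectralRadius_le_spectralRadius_map_complex M)

lemma Matrix.IsHermitian.dotProduct_mulVec_le {A : Matrix n n ℝ} (hA : A.IsHermitian)
    (v : n → ℝ) : v ⬝ᵥ A *ᵥ v ≤ (spectralRadius ℝ A).toReal * (v ⬝ᵥ v) := by
  let T := Matrix.toEuclideanCLM (n := n) (𝕜 := ℝ) A
  let x : EuclideanSpace ℝ n := WithLp.toLp 2 v
  have hsa : IsSelfAdjoint T := by rw [IsSelfAdjoint, ← map_star, hA.star_eq]
  have hspec : spectralRadius ℝ A = spectralRadius ℝ T := by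
    unfold spectralRadius
    rw [AlgEquiv.spectrum_eq]
  have hT : (spectralRadius ℝ A).toReal = ‖T‖ := by
    rw [hspec, ContinuousLinearMap.spectralRadius_eq_nnnorm T hsa]
    rfl
  have hx : v ⬝ᵥ v = ‖x‖ ^ 2 := by
    rw [EuclideanSpace.norm_sq_eq]
    simp [x, dotProduct, sq]
  calc v ⬝ᵥ A *ᵥ v = ⟪x, T x⟫ := (Matrix.inner_toEuclideanCLM A x x).symm
    _ ≤ ‖x‖ * ‖T x‖ := real_inner_le_norm _ _
    _ ≤ ‖x‖ * (‖T‖ * ‖x‖) := by gcongr; exact T.le_opNorm x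
    _ = (spectralRadius ℝ A).toReal * (v ⬝ᵥ v) := by rw [hT, hx]; ring

lemma spectrum_diagonal_conj (M : Matrix n n ℝ) {s : n → ℝ} (hs : ∀ i, s i ≠ 0) :
    spectrum ℝ (Matrix.of fun i j => s i * M i j / s j) = spectrum ℝ M := by
  let D : (Matrix n n ℝ)ˣ :=
    { val := Matrix.diagonal s
      inv := Matrix.diagonal s⁻¹
      val_inv := by simp [Matrix.diagonal_mul_diagonal, mul_inv_cancel₀ (hs _)]
      inv_val := by simp [Matrix.diagonal_mul_diagonal, inv_mul_cancel₀ (hs _)] }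
  have hconj : (Matrix.of fun i j => s i * M i j / s j)
      = (D : Matrix n n ℝ) * M * ((D⁻¹ : (Matrix n n ℝ)ˣ) : Matrix n n ℝ) := by
    ext i j
    simp [D, Matrix.diagonal_mul, Matrix.mul_diagonal, div_eq_mul_inv]
  rw [hconj, spectrum.units_conjugate]

lemma sum_mul_mul_le_rho_of_reversible {M : Matrix n n ℝ} {w : n → ℝ} (hw : ∀ i, 0 < w i)
    (hrev : ∀ i j, w i * M i j = w j * M j i) (v : n → ℝ) :
    ∑ i, ∑ j, v i * w i * M i j * v j ≤ rho M * ∑ i, w i * v i ^ 2 := by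
  let s i := √(w i)
  have hs : ∀ i, s i ≠ 0 := fun i => (Real.sqrt_pos.2 (hw i)).ne'
  have hss : ∀ i, s i * s i = w i := fun i => Real.mul_self_sqrt (hw i).le
  -- `A = D M D⁻¹` for `D = diagonal s` is symmetric, and `u = D v` turns the form into `uᵀ A u`.
  let A : Matrix n n ℝ := Matrix.of fun i j => s i * M i j / s j
  have hA : A.IsHermitian := by
    ext i j
    simp only [A, Matrix.conjTranspose_apply, Matrix.of_apply, star_trivial]
    rw [div_eq_div_iff (hs i) (hs j)]
    linear_combination M j i * hss j + hrev j i - M i j * hss i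
  let u i := s i * v i
  have hquad : ∑ i, ∑ j, v i * w i * M i j * v j = u ⬝ᵥ A *ᵥ u := by
    simp only [dotProduct, Matrix.mulVec, Finset.mul_sum]
    refine Finset.sum_congr rfl fun i _ => Finset.sum_congr rfl fun j _ => ?_
    simp only [A, u, Matrix.of_apply, ← hss i]
    field_simp [hs j]
  have hnorm : ∑ i, w i * v i ^ 2 = u ⬝ᵥ u := by
    simp only [dotProduct, u, ← hss]
    exact Finset.sum_congr rfl fun i _ => by ring
  have hρ : (spectralRadius ℝ A).toReal ≤ rho M := by
    have : spectralRadius ℝ A = spectralRadius ℝ M := by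
      unfold spectralRadius
      rw [spectrum_diagonal_conj M hs]
    exact this ▸ toReal_spectralRadius_le_rho M
  rw [hquad, hnorm]
  exact (hA.dotProduct_mulVec_le u).trans
    (mul_le_mul_of_nonneg_right hρ (Finset.sum_nonneg fun i _ => mul_self_nonneg (u i)))

lemma sum_mul_sum_le_rho_mul_sum_of_reversible {M : Matrix n n ℝ} {w : n → ℝ}
    (hw : ∀ i, 0 < w i) (hrev : ∀ i j, w i * M i j = w j * M j i) (S : Finset n) :
    ∑ i ∈ S, w i * ∑ j ∈ S, M i j ≤ rho M * ∑ i ∈ S, w i := by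
  simpa only [ite_mul, one_mul, zero_mul, mul_ite, mul_one, mul_zero, Finset.sum_ite_mem,
    Finset.univ_inter, Finset.sum_ite_irrel, Finset.sum_const_zero, ite_pow, one_pow, ne_eq,
    OfNat.ofNat_ne_zero, not_false_eq_true, zero_pow, Finset.mul_sum] using
    sum_mul_mul_le_rho_of_reversible hw hrev fun i => if i ∈ S then 1 else 0

end Spectral

section Estimates

variable {ι : Type*}

lemma sq_sum_sum_sqrt_mul_le (s : Finset ι) {f g : ι → ι → ℝ} (hf : ∀ i j, 0 ≤ f i j)
    (hg : ∀ i j, 0 ≤ g i j) :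
    (∑ i ∈ s, ∑ j ∈ s, √(f i j * g i j)) ^ 2
      ≤ (∑ i ∈ s, ∑ j ∈ s, f i j) * ∑ i ∈ s, ∑ j ∈ s, g i j := by
  simp only [← Finset.sum_product']
  exact Finset.sum_sq_le_sum_mul_sum_of_sq_le_mul _ (fun p _ => hf p.1 p.2) (fun p _ => hg p.1 p.2)
    fun p _ => (Real.sq_sqrt (mul_nonneg (hf p.1 p.2) (hg p.1 p.2))).le

lemma sum_mul_le_of_comparable_weights {s : Finset ι} {x y B : ι → ℝ} {c C r q : ℝ}
    (hc : 0 < c) (hr : 0 ≤ r) (hx : ∀ i ∈ s, 0 ≤ x i) (hB : ∀ i ∈ s, 0 ≤ B i)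
    (hlo : ∀ i ∈ s, c * x i ≤ y i) (hhi : ∀ i ∈ s, y i ≤ C * x i) (hrq : r * C ≤ q * c)
    (hy : ∑ i ∈ s, y i * B i ≤ r * ∑ i ∈ s, y i) :
    ∑ i ∈ s, x i * B i ≤ q * ∑ i ∈ s, x i := by
  have hxs : 0 ≤ ∑ i ∈ s, x i := Finset.sum_nonneg hx
  refine le_of_mul_le_mul_left ?_ hc
  calc c * ∑ i ∈ s, x i * B i = ∑ i ∈ s, c * x i * B i := by
        rw [Finset.mul_sum]; simp only [mul_assoc]
    _ ≤ ∑ i ∈ s, y i * B i :=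
      Finset.sum_le_sum fun i hi => mul_le_mul_of_nonneg_right (hlo i hi) (hB i hi)
    _ ≤ r * ∑ i ∈ s, y i := hy
    _ ≤ r * (C * ∑ i ∈ s, x i) := by
      gcongr
      rw [Finset.mul_sum]
      exact Finset.sum_le_sum hhi
    _ ≤ q * c * ∑ i ∈ s, x i := by rw [← mul_assoc]; gcongr
    _ = c * (q * ∑ i ∈ s, x i) := by ring

end Estimates

lemma sqrt_mul_bounds {a b δ : ℝ} (hb : 0 < b) (h : |a / b - 1| ≤ δ) :
    √(1 - δ) * b ≤ √(a * b) ∧ √(a * b) ≤ √(1 + δ) * b := by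
  have hab : √(a * b) = √(a / b) * b := by
    rw [show a * b = a / b * (b * b) by field_simp, Real.sqrt_mul' _ (mul_self_nonneg b),
      Real.sqrt_mul_self hb.le]
  obtain ⟨hlo, hhi⟩ := abs_le.1 h
  rw [hab]
  exact ⟨by gcongr; linarith, by gcongr; linarith⟩

lemma one_sub_mul_sqrt_le {ε : ℝ} (hε0 : 0 ≤ ε) (hε1 : ε ≤ 1) :
    (1 - ε) * √(1 + ε / 2) ≤ (1 - ε / 2) * √(1 - ε / 2) := by
  have hsqrt {t : ℝ} (ht : 0 ≤ t) (u : ℝ) : t * √u = √(t ^ 2 * u) := by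
    rw [Real.sqrt_mul (sq_nonneg t), Real.sqrt_sq ht]
  rw [hsqrt (by linarith), hsqrt (by linarith)]
  apply Real.sqrt_le_sqrt
  -- the difference of the two sides is `ε² (6 - 5ε) / 8`
  nlinarith [mul_nonneg (mul_nonneg hε0 hε0) (by linarith : (0 : ℝ) ≤ 6 - 5 * ε)]

lemma div_four_le_one_sub_add_sqrt {A a b ε : ℝ} (hε : 0 ≤ ε) (hA0 : 0 ≤ A)
    (hA : A ≤ 1 - ε / 2) (ha : A ^ 2 ≤ a) (hb1 : b ≤ 1) (hb : 1 - ε / 16 ≤ b) :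
    ε / 4 ≤ 1 - (A + √((1 - a) * (1 - b))) := by
  have hprod : (1 - a) * (1 - b) ≤ ((1 - A) / 2) ^ 2 :=
    calc (1 - a) * (1 - b) ≤ (1 - A ^ 2) * (ε / 16) :=
          mul_le_mul (by linarith) (by linarith) (by linarith) (by nlinarith)
      _ ≤ ((1 - A) / 2) ^ 2 := by nlinarith [mul_nonneg hA0 hε]
  have := (Real.sqrt_le_sqrt hprod).trans_eq (Real.sqrt_sq (by linarith))
  linarith

section Distribution

variable {d : ℕ}

lemma distributionPair_nonneg {S : Finset (Fin d)} {Q : Matrix (Fin d) (Fin d) ℝ}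
    {ν : Fin d → ℝ} (hQ : ∀ i j, 0 ≤ Q i j) (hν : ∀ i, 0 ≤ ν i) (i j : Fin d) :
    0 ≤ distributionPair S Q ν i j :=
  div_nonneg (mul_nonneg (hν i) (hQ i j)) (Finset.sum_nonneg fun k _ => hν k)

lemma sum_distributionPair_le_one {S : Finset (Fin d)} {Q : Matrix (Fin d) (Fin d) ℝ}
    {ν : Fin d → ℝ} (hQ : IsStochastic Q) (hν : ∀ i, 0 ≤ ν i) :
    ∑ i ∈ S, ∑ j ∈ S, distributionPair S Q ν i j ≤ 1 := by
  have hrow : ∀ i ∈ S, ∑ j ∈ S, distributionPair S Q ν i j ≤ ν i / ∑ k ∈ S, ν k := by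
    intro i _
    have hQS : ∑ j ∈ S, Q i j ≤ 1 :=
      (Finset.sum_le_sum_of_subset_of_nonneg (Finset.subset_univ S)
        fun j _ _ => hQ.1 i j).trans_eq (hQ.2 i)
    simp only [distributionPair, ← Finset.sum_div, ← Finset.mul_sum]
    gcongr
    exacts [Finset.sum_nonneg fun k _ => hν k, mul_le_of_le_one_right (hν i) hQS]
  calc _ ≤ ∑ i ∈ S, ν i / ∑ k ∈ S, ν k := Finset.sum_le_sum hrow
    _ ≤ 1 := by rw [← Finset.sum_div]; exact div_self_le_one _

lemma sqrt_distributionPair_mul {S : Finset (Fin d)} {P Q : Matrix (Fin d) (Fin d) ℝ}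
    {ν : Fin d → ℝ} (hν : ∀ i, 0 ≤ ν i) (i j : Fin d) :
    √(distributionPair S P ν i j * distributionPair S Q ν i j)
      = ν i * √(P i j * Q i j) / ∑ k ∈ S, ν k := by
  have hνS : 0 ≤ ν i / ∑ k ∈ S, ν k := div_nonneg (hν i) (Finset.sum_nonneg fun k _ => hν k)
  rw [show distributionPair S P ν i j * distributionPair S Q ν i j
      = (ν i / ∑ k ∈ S, ν k) ^ 2 * (P i j * Q i j) by simp only [distributionPair]; ring,
    Real.sqrt_mul (sq_nonneg _), Real.sqrt_sq hνS]
  ring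

lemma IsReversible.sqrtm_hadamard_s11 {P Q : Matrix (Fin d) (Fin d) ℝ} {π ν : Fin d → ℝ}
    (hP : IsReversible P π) (hQ : IsReversible Q ν) (hπν : ∀ i, 0 ≤ π i * ν i) :
    IsReversible (sqrtm (P ⊙ Q)) fun i => √(π i * ν i) := by
  intro i j
  simp only [sqrtm, Matrix.of_apply, Matrix.hadamard_apply]
  rw [← Real.sqrt_mul (hπν i), ← Real.sqrt_mul (hπν j)]
  congr 1
  linear_combination (ν i * Q i j) * hP i j + (π j * P j i) * hQ i j

end Distribution

lemma sum_sum_mul_sqrt_hadamard_le {d : ℕ} {P Pbar : Matrix (Fin d) (Fin d) ℝ}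
    {π πbar : Fin d → ℝ} {ε : ℝ} (S : Finset (Fin d)) (hπ : ∀ i, 0 < π i)
    (hπbar : ∀ i, 0 < πbar i) (hrev : IsReversible P π) (hrevbar : IsReversible Pbar πbar)
    (hε0 : 0 ≤ ε) (hε1 : ε ≤ 1) (hρ : rho (sqrtm (P ⊙ Pbar)) ≤ 1 - ε)
    (hclose : ∀ i, |π i / πbar i - 1| ≤ ε / 2) :
    ∑ i ∈ S, ∑ j ∈ S, πbar i * √(P i j * Pbar i j) ≤ (1 - ε / 2) * ∑ i ∈ S, πbar i := by
  set M := sqrtm (P ⊙ Pbar)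
  set w : Fin d → ℝ := fun i => √(π i * πbar i)
  have hw : ∀ i, 0 < w i := fun i => Real.sqrt_pos.2 (mul_pos (hπ i) (hπbar i))
  have hwM : IsReversible M w :=
    hrev.sqrtm_hadamard_s11 hrevbar fun i => (mul_pos (hπ i) (hπbar i)).le
  have hspec : ∑ i ∈ S, w i * ∑ j ∈ S, M i j ≤ (1 - ε) * ∑ i ∈ S, w i :=
    (sum_mul_sum_le_rho_mul_sum_of_reversible hw hwM S).trans
      (mul_le_mul_of_nonneg_right hρ (Finset.sum_nonneg fun i _ => (hw i).le))
  have hbounds (i : Fin d) := sqrt_mul_bounds (hπbar i) (hclose i)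
  simp only [← Finset.mul_sum]
  exact sum_mul_le_of_comparable_weights (Real.sqrt_pos.2 (by linarith)) (by linarith)
    (fun i _ => (hπbar i).le) (fun i _ => Finset.sum_nonneg fun j _ => Real.sqrt_nonneg _)
    (fun i _ => (hbounds i).1) (fun i _ => (hbounds i).2) (one_sub_mul_sqrt_le hε0 hε1) hspec

theorem hellinger_lower_bound_component_general {d : ℕ} (P Pbar : Matrix (Fin d) (Fin d) ℝ)
    (π πbar : Fin d → ℝ)
    (hP : IsStochastic P) (hPbar : IsStochastic Pbar)
    (hstat : IsStationaryMC P π) (hstatbar : IsStationaryMC Pbar πbar)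
    (hrev : IsReversible P π) (hrevbar : IsReversible Pbar πbar)
    (ε : ℝ) (hε : ε ∈ Set.Ioo (0 : ℝ) 1)
    (hdist : ε ≤ mcDist P Pbar)
    (hclose : ∀ i, |π i / πbar i - 1| ≤ ε / 2)
    (S : Finset (Fin d))
    (hmass : 1 - ε / 16 ≤ ∑ i ∈ S, ∑ j ∈ S, distributionPair S Pbar πbar i j) :
    ε ^ 2 / 128
      ≤ 1 - ((∑ i ∈ S, ∑ j ∈ S,
            Real.sqrt (distributionPair S P πbar i j * distributionPair S Pbar πbar i j))
          + Real.sqrt (distributionInfty S P πbar * distributionInfty S Pbar πbar)) := by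
  obtain ⟨hε0, hε1⟩ := hε
  have hπbar (i : Fin d) : 0 ≤ πbar i := (hstatbar.1 i).le
  have hρ : rho (sqrtm (P ⊙ Pbar)) ≤ 1 - ε := by
    unfold mcDist at hdist
    linarith
  have haff : ∑ i ∈ S, ∑ j ∈ S,
      √(distributionPair S P πbar i j * distributionPair S Pbar πbar i j) ≤ 1 - ε / 2 := by
    simp only [sqrt_distributionPair_mul hπbar, ← Finset.sum_div]
    exact div_le_of_le_mul₀ (Finset.sum_nonneg fun i _ => hπbar i) (by linarith)
      (sum_sum_mul_sqrt_hadamard_le S hstat.1 hstatbar.1 hrev hrevbar hε0.le hε1.le hρ hclose)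
  have hp := distributionPair_nonneg (S := S) hP.1 hπbar
  have hq := distributionPair_nonneg (S := S) hPbar.1 hπbar
  have hqS := sum_distributionPair_le_one (S := S) hPbar hπbar
  have hcs : (∑ i ∈ S, ∑ j ∈ S,
      √(distributionPair S P πbar i j * distributionPair S Pbar πbar i j)) ^ 2
        ≤ ∑ i ∈ S, ∑ j ∈ S, distributionPair S P πbar i j :=
    (sq_sum_sum_sqrt_mul_le S hp hq).trans (mul_le_of_le_one_right
      (Finset.sum_nonneg fun i _ => Finset.sum_nonneg fun j _ => hp i j) hqS)
  have hbound := div_four_le_one_sub_add_sqrt hε0.le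
    (Finset.sum_nonneg fun i _ => Finset.sum_nonneg fun j _ => Real.sqrt_nonneg _)
    haff hcs hqS hmass
  have hεsq : ε ^ 2 / 128 ≤ ε / 4 := by nlinarith
  unfold distributionInfty
  linarith

/-- If `Distance(P,P̄) ≥ ε`, the stationary distributions are `ε/2`-close and `S`
carries `1 - ε/16` of the reference mass, then the squared Hellinger distance
between `Distribution(S,P,π̄)` and `Distribution(S,P̄,π̄)` is at least `ε²/128`. -/
theorem hellinger_lower_bound_component {d : ℕ} (P Pbar : Matrix (Fin d) (Fin d) ℝ)
    (π πbar : Fin d → ℝ)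
    (hP : IsStochastic P) (hPbar : IsStochastic Pbar)
    (hirr : IsIrreducibleMC P) (hirrbar : IsIrreducibleMC Pbar)
    (hstat : IsStationaryMC P π) (hstatbar : IsStationaryMC Pbar πbar)
    (hrev : IsReversible P π) (hrevbar : IsReversible Pbar πbar)
    (ε : ℝ) (hε : ε ∈ Set.Ioo (0 : ℝ) 1)
    (hdist : ε ≤ mcDist P Pbar)
    (hclose : ∀ i, |π i / πbar i - 1| ≤ ε / 2)
    (S : Finset (Fin d))
    (hmass : 1 - ε / 16 ≤ ∑ i ∈ S, ∑ j ∈ S, distributionPair S Pbar πbar i j) :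
    ε ^ 2 / 128
      ≤ 1 - ((∑ i ∈ S, ∑ j ∈ S,
            Real.sqrt (distributionPair S P πbar i j * distributionPair S Pbar πbar i j))
          + Real.sqrt (distributionInfty S P πbar * distributionInfty S Pbar πbar)) :=
  hellinger_lower_bound_component_general P Pbar π πbar hP hPbar hstat hstatbar hrev hrevbar ε hε
    hdist hclose S hmass
end

section
/- Let α ≥ 0 and let (B_t) be Bernoulli random variables, not necessarily independent, such that for every t, the conditional expectation E[B_t | B_1 = b_1, …, B_{t-1} = b_{t-1}] ≥ α for all histories b_1,…,b_{t-1} ∈ {0,1}. Then for every n, P(Σ_{t=1}^n B_t ≤ αn/2) ≤ exp(-α²n/2). -/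
/-!
Chernoff's method with `l = 2α`. Write `S t = B 0 + ⋯ + B (t - 1)`. Markov's inequality bounds the
probability by `exp (l α n / 2) * E[exp (-l S n)]`. Since `exp (-l S t)` is a function of the
history before `t`, the hypothesis applied on each history cell gives
`E[exp (-l S t) B t] ≥ α E[exp (-l S t)]`, and as `exp (-l b) = 1 - (1 - exp (-l)) b` on `{0, 1}`
this yields `E[exp (-l S (t + 1))] ≤ (1 - α + α exp (-l)) E[exp (-l S t)]`. Hoeffding's lemma for
a Bernoulli(`α`) variable bounds the factor by `exp (-l α + l² / 8)`.
-/

open MeasureTheory ProbabilityTheory Real Finset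

lemma one_sub_add_mul_exp_neg_le {p : ℝ} (hp₀ : 0 ≤ p) (hp₁ : p ≤ 1) (l : ℝ) :
    1 - p + p * exp (-l) ≤ exp (-(l * p) + l ^ 2 / 8) := by
  set ν : Measure ℝ := Ber((1 : ℝ), 0, ⟨p, hp₀, hp₁⟩)
  have hmean : ∫ x, x ∂ν = p := by simp [ν, integral_bernoulliMeasure]
  have hsupp : ∀ᵐ x ∂ν, x ∈ Set.Icc (0 : ℝ) 1 := by
    rw [ae_iff]
    simp only [Set.mem_Icc, not_and_or, not_le]
    exact bernoulliMeasure_apply_of_notMem_of_notMem _ (by measurability) (by norm_num)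
      (by norm_num)
  have hoeffding := (hasSubgaussianMGF_of_mem_Icc aemeasurable_id hsupp).mgf_le (-l)
  simp only [mgf, id, hmean, ν, integral_bernoulliMeasure] at hoeffding
  norm_num at hoeffding
  calc 1 - p + p * exp (-l)
      = exp (-(l * p)) * (p * exp (-(l * (1 - p))) + (1 - p) * exp (l * p)) := by
        have h₁ : exp (-(l * p)) * exp (l * p) = 1 := by rw [← exp_add]; simp
        have h₂ : exp (-(l * p)) * exp (-(l * (1 - p))) = exp (-l) := by rw [← exp_add]; ring_nf
        linear_combination -(1 - p) * h₁ - p * h₂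
    _ ≤ exp (-(l * p)) * exp (1 / 4 * l ^ 2 / 2) := by gcongr
    _ = exp (-(l * p) + l ^ 2 / 8) := by rw [← exp_add]; ring_nf

lemma integral_eq_sum_setIntegral_preimage_singleton {Ω β E : Type*} [MeasurableSpace Ω]
    [NormedAddCommGroup E] [NormedSpace ℝ E] {μ : Measure Ω} {f : Ω → β} {s : Finset β}
    (hfs : ∀ ω, f ω ∈ s) (hf : ∀ b ∈ s, MeasurableSet (f ⁻¹' {b})) {g : Ω → E}
    (hg : Integrable g μ) :
    ∫ ω, g ω ∂μ = ∑ b ∈ s, ∫ ω in f ⁻¹' {b}, g ω ∂μ := by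
  rw [← integral_biUnion_finset s hf (Set.pairwiseDisjoint_fiber f s) fun _ _ => hg.integrableOn,
    set_biUnion_preimage_singleton, Set.preimage_eq_univ_iff.2 fun _ ⟨ω, hω⟩ => hω ▸ hfs ω,
    setIntegral_univ]

section History

variable {Ω : Type*} {B : ℕ → Ω → ℝ} {t : ℕ}

/-- For `{0, 1}`-valued `B`, this set determines the history `(B 0 ω, …, B (t - 1) ω)`. -/
noncomputable def onesBefore (B : ℕ → Ω → ℝ) (t : ℕ) (ω : Ω) : Finset ℕ :=
  (range t).filter fun s => B s ω = 1

lemma onesBefore_mem_powerset (ω : Ω) : onesBefore B t ω ∈ (range t).powerset :=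
  mem_powerset.2 (filter_subset _ _)

lemma onesBefore_preimage_singleton (hB : ∀ s ω, B s ω = 0 ∨ B s ω = 1) {I : Finset ℕ}
    (hI : I ⊆ range t) :
    onesBefore B t ⁻¹' {I} = {ω | ∀ s < t, B s ω = if s ∈ I then 1 else 0} := by
  ext ω
  simp only [Set.mem_preimage, Set.mem_singleton_iff, Set.mem_ofPred_eq, onesBefore,
    Finset.ext_iff, mem_filter, mem_range]
  constructor
  · intro h s hs
    split_ifs with hsI
    · exact ((h s).2 hsI).2
    · exact (hB s ω).resolve_right fun h₁ => hsI ((h s).1 ⟨hs, h₁⟩)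
  · intro h s
    constructor
    · rintro ⟨hs, h₁⟩
      by_contra hsI
      rw [h s hs, if_neg hsI] at h₁
      exact zero_ne_one h₁
    · intro hsI
      have hs := mem_range.1 (hI hsI)
      exact ⟨hs, by rw [h s hs, if_pos hsI]⟩

lemma sum_range_eq_card_onesBefore (hB : ∀ s ω, B s ω = 0 ∨ B s ω = 1) (t : ℕ) (ω : Ω) :
    ∑ s ∈ range t, B s ω = #(onesBefore B t ω) := by
  rw [onesBefore, natCast_card_filter]
  refine sum_congr rfl fun s _ => ?_
  rcases hB s ω with h | h <;> simp [h]

variable [MeasurableSpace Ω] {μ : Measure Ω}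

lemma measurableSet_history (hmeas : ∀ s, Measurable (B s)) (b : ℕ → ℝ) :
    MeasurableSet {ω | ∀ s < t, B s ω = b s} := by
  simp only [Set.ofPred_forall]
  exact .iInter fun s => .iInter fun _ => hmeas s (measurableSet_singleton _)

lemma mul_integral_le_integral_mul_of_onesBefore (hmeas : ∀ s, Measurable (B s))
    (hB : ∀ s ω, B s ω = 0 ∨ B s ω = 1) {α : ℝ}
    (hcond : ∀ b : ℕ → ℝ, α * μ.real {ω | ∀ s < t, B s ω = b s}
      ≤ ∫ ω in {ω | ∀ s < t, B s ω = b s}, B t ω ∂μ)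
    {F : Finset ℕ → ℝ} (hF : ∀ I, 0 ≤ F I) (hint : Integrable (fun ω => F (onesBefore B t ω)) μ) :
    α * ∫ ω, F (onesBefore B t ω) ∂μ ≤ ∫ ω, F (onesBefore B t ω) * B t ω ∂μ := by
  have hfiber (I) (hI : I ∈ (range t).powerset) : MeasurableSet (onesBefore B t ⁻¹' {I}) := by
    rw [onesBefore_preimage_singleton hB (mem_powerset.1 hI)]
    exact measurableSet_history hmeas _
  have hint' : Integrable (fun ω => F (onesBefore B t ω) * B t ω) μ :=
    hint.mul_bdd (hmeas t).aestronglyMeasurable (c := 1) <| ae_of_all _ fun ω => by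
      rcases hB t ω with h | h <;> simp [h]
  rw [integral_eq_sum_setIntegral_preimage_singleton onesBefore_mem_powerset hfiber hint,
    integral_eq_sum_setIntegral_preimage_singleton onesBefore_mem_powerset hfiber hint', mul_sum]
  refine sum_le_sum fun I hI => ?_
  have hconst : ∀ ω ∈ onesBefore B t ⁻¹' {I}, F (onesBefore B t ω) = F I :=
    fun ω hω => congrArg F hω
  have hlhs : ∫ ω in onesBefore B t ⁻¹' {I}, F (onesBefore B t ω) ∂μ
      = μ.real (onesBefore B t ⁻¹' {I}) * F I := by
    rw [setIntegral_congr_fun (hfiber I hI) hconst, setIntegral_const, smul_eq_mul]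
  have hrhs : ∫ ω in onesBefore B t ⁻¹' {I}, F (onesBefore B t ω) * B t ω ∂μ
      = F I * ∫ ω in onesBefore B t ⁻¹' {I}, B t ω ∂μ := by
    rw [← integral_const_mul]
    exact setIntegral_congr_fun (hfiber I hI) fun ω hω => by simp only [hconst ω hω]
  rw [hlhs, hrhs, onesBefore_preimage_singleton hB (mem_powerset.1 hI)]
  calc α * (μ.real _ * F I) = F I * (α * μ.real _) := by ring
    _ ≤ F I * _ := mul_le_mul_of_nonneg_left (hcond _) (hF I)

lemma integrable_exp_neg_mul_sum_range [IsFiniteMeasure μ] (hmeas : ∀ s, Measurable (B s))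
    (hB₀ : ∀ s ω, 0 ≤ B s ω) {l : ℝ} (hl : 0 ≤ l) (t : ℕ) :
    Integrable (fun ω => exp (-l * ∑ s ∈ range t, B s ω)) μ := by
  refine .of_bound (by fun_prop) 1 (ae_of_all _ fun ω => ?_)
  have : 0 ≤ l * ∑ s ∈ range t, B s ω := mul_nonneg hl (sum_nonneg fun s _ => hB₀ s ω)
  rw [norm_of_nonneg (exp_pos _).le, exp_le_one_iff]
  linarith

lemma mgf_sum_range_succ_le [IsFiniteMeasure μ] (hmeas : ∀ s, Measurable (B s))
    (hB : ∀ s ω, B s ω = 0 ∨ B s ω = 1) {α : ℝ}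
    (hcond : ∀ b : ℕ → ℝ, α * μ.real {ω | ∀ s < t, B s ω = b s}
      ≤ ∫ ω in {ω | ∀ s < t, B s ω = b s}, B t ω ∂μ)
    {l : ℝ} (hl : 0 ≤ l) :
    mgf (fun ω => ∑ s ∈ range (t + 1), B s ω) μ (-l)
      ≤ (1 - α + α * exp (-l)) * mgf (fun ω => ∑ s ∈ range t, B s ω) μ (-l) := by
  set G : Ω → ℝ := fun ω => exp (-l * ∑ s ∈ range t, B s ω)
  have hB₀ (s : ℕ) (ω : Ω) : 0 ≤ B s ω := by rcases hB s ω with h | h <;> simp [h]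
  have hG : Integrable G μ := integrable_exp_neg_mul_sum_range hmeas hB₀ hl t
  have hGB : α * ∫ ω, G ω ∂μ ≤ ∫ ω, G ω * B t ω ∂μ := by
    have hG_eq : G = fun ω => exp (-l * #(onesBefore B t ω)) := by
      funext ω; simp only [G, sum_range_eq_card_onesBefore hB]
    rw [hG_eq] at hG ⊢
    exact mul_integral_le_integral_mul_of_onesBefore hmeas hB hcond
      (F := fun I => exp (-l * #I)) (fun _ => (exp_pos _).le) hG
  have hsucc (ω : Ω) : exp (-l * ∑ s ∈ range (t + 1), B s ω)
      = G ω - (1 - exp (-l)) * (G ω * B t ω) := by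
    rw [sum_range_succ, mul_add, exp_add]
    rcases hB t ω with h | h
    · simp [h, G]
    · simp [h, G]; ring
  have hint : Integrable (fun ω => G ω * B t ω) μ :=
    hG.mul_bdd (hmeas t).aestronglyMeasurable (c := 1) <| ae_of_all _ fun ω => by
      rcases hB t ω with h | h <;> simp [h]
  calc mgf (fun ω => ∑ s ∈ range (t + 1), B s ω) μ (-l)
      = ∫ ω, G ω ∂μ - (1 - exp (-l)) * ∫ ω, G ω * B t ω ∂μ := by
        rw [mgf, integral_congr_ae (ae_of_all _ hsucc), integral_sub hG (hint.const_mul _),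
          integral_const_mul]
    _ ≤ ∫ ω, G ω ∂μ - (1 - exp (-l)) * (α * ∫ ω, G ω ∂μ) :=
        sub_le_sub_left (mul_le_mul_of_nonneg_left hGB
          (sub_nonneg.2 (exp_le_one_iff.2 (neg_nonpos.2 hl)))) _
    _ = (1 - α + α * exp (-l)) * mgf (fun ω => ∑ s ∈ range t, B s ω) μ (-l) := by
        rw [mgf]; ring

lemma mgf_sum_range_le [IsProbabilityMeasure μ] (hmeas : ∀ s, Measurable (B s))
    (hB : ∀ s ω, B s ω = 0 ∨ B s ω = 1) {α : ℝ} (hα₀ : 0 ≤ α) (hα₁ : α ≤ 1)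
    (hcond : ∀ (t : ℕ) (b : ℕ → ℝ), α * μ.real {ω | ∀ s < t, B s ω = b s}
      ≤ ∫ ω in {ω | ∀ s < t, B s ω = b s}, B t ω ∂μ)
    {l : ℝ} (hl : 0 ≤ l) (n : ℕ) :
    mgf (fun ω => ∑ s ∈ range n, B s ω) μ (-l) ≤ exp (-(l * α) + l ^ 2 / 8) ^ n := by
  induction n with
  | zero => simp
  | succ n ih =>
    calc mgf (fun ω => ∑ s ∈ range (n + 1), B s ω) μ (-l)
        ≤ (1 - α + α * exp (-l)) * mgf (fun ω => ∑ s ∈ range n, B s ω) μ (-l) :=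
          mgf_sum_range_succ_le hmeas hB (hcond n) hl
      _ ≤ exp (-(l * α) + l ^ 2 / 8) * exp (-(l * α) + l ^ 2 / 8) ^ n := by
          gcongr
          · exact mgf_nonneg
          · exact one_sub_add_mul_exp_neg_le hα₀ hα₁ l
      _ = exp (-(l * α) + l ^ 2 / 8) ^ (n + 1) := (pow_succ' _ _).symm

end History

/-- Chernoff-type bound for (possibly dependent) Bernoulli variables whose conditional
means, given any history, are at least `α`: the probability that the first `n` sum to at
most `αn/2` is at most `exp(-α²n/2)`. -/
theorem bernoulli_history_lower_bound {Ω : Type*} [MeasurableSpace Ω]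
    (μ : Measure Ω) [IsProbabilityMeasure μ]
    (B : ℕ → Ω → ℝ) (hmeas : ∀ t, Measurable (B t))
    (hBern : ∀ t ω, B t ω = 0 ∨ B t ω = 1)
    (α : ℝ) (hα : 0 ≤ α)
    (hcond : ∀ (t : ℕ) (b : ℕ → ℝ),
      α * (μ {ω | ∀ s < t, B s ω = b s}).toReal
        ≤ ∫ ω in {ω | ∀ s < t, B s ω = b s}, B t ω ∂μ)
    (n : ℕ) :
    (μ {ω | ∑ t ∈ Finset.range n, B t ω ≤ α * n / 2}).toReal
      ≤ Real.exp (-(α ^ 2) * n / 2) := by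
  have hB₀ (t : ℕ) (ω : Ω) : 0 ≤ B t ω := by rcases hBern t ω with h | h <;> simp [h]
  have hα₁ : α ≤ 1 := by
    have h := hcond 0 fun _ => 0
    simp only [not_lt_zero, IsEmpty.forall_iff, implies_true, Set.ofPred_true, measure_univ,
      ENNReal.toReal_one, mul_one, Measure.restrict_univ] at h
    refine h.trans ((integral_mono_of_nonneg (ae_of_all _ (hB₀ 0)) (integrable_const 1)
      (ae_of_all _ fun ω => ?_)).trans (by simp))
    rcases hBern 0 ω with h | h <;> simp [h]
  have hl : 0 ≤ 2 * α := by positivity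
  calc μ.real {ω | ∑ t ∈ range n, B t ω ≤ α * n / 2}
      ≤ exp (-(-(2 * α)) * (α * n / 2)) * mgf (fun ω => ∑ t ∈ range n, B t ω) μ (-(2 * α)) :=
        measure_le_le_exp_mul_mgf _ (neg_nonpos.2 hl)
          (integrable_exp_neg_mul_sum_range hmeas hB₀ hl n)
    _ ≤ exp (-(-(2 * α)) * (α * n / 2)) * exp (-(2 * α * α) + (2 * α) ^ 2 / 8) ^ n := by
        gcongr
        exact mgf_sum_range_le hmeas hBern hα hα₁ hcond hl n
    _ = exp (-(α ^ 2) * n / 2) := by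
        rw [← exp_nat_mul, ← exp_add]; ring_nf
end

section
/- For every ε > 0 and δ > 0 there exist two irreducible reversible Markov chains P, P̄ on 2 states such that Distance(P,P̄) = 1 - ρ(√(P∘P̄)) < ε while the squared Hellinger distance between their stationary distributions exceeds 1/4. Concretely, for small α > 0 take P = [[1-α, α],[1/2, 1/2]] and P̄ = [[1-α, α],[α, 1-α]]: then as α → 0, Distance(P,P̄) → 0 while d²_Hel(π, π̄) → 1 - 1/√2 > 1/4. -/
/-!
For a real 2×2 matrix whose off-diagonal product is nonnegative, the larger root of the
characteristic polynomial is real and dominates the diagonal entries. Applied to `√(P ∘ P̄)`, whose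
entries are nonnegative, this gives `ρ ≥ √(P₀₀ P̄₀₀) = 1 - α`, so the distance is at most `α`. The
stationary laws are `π = (1, 2α) / (1 + 2α)` and `π̄ = (1/2, 1/2)`, so the Hellinger affinity is
at most `√(1/2) + √α < 3/4` once `α ≤ 1/900`.
-/

open Matrix BigOperators Finset

theorem le_rho_of_det_eq_zero {n : Type*} [Fintype n] [DecidableEq n] (A : Matrix n n ℝ)
    {l : ℝ} (hl : 0 ≤ l) (hdet : (scalar n l - A).det = 0) : l ≤ rho A := by
  set B := A.map (algebraMap ℝ ℂ)
  have hmem : (l : ℂ) ∈ spectrum ℂ B := by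
    have : algebraMap ℂ (Matrix n n ℂ) l - B = (scalar n l - A).map (algebraMap ℝ ℂ) := by
      ext i j
      by_cases h : i = j <;> simp [B, h, Matrix.algebraMap_matrix_apply]
    rw [spectrum.mem_iff, Matrix.isUnit_iff_isUnit_det, this, ← RingHom.mapMatrix_apply,
      ← RingHom.map_det, hdet, map_zero]
    exact not_isUnit_zero
  have hfin : spectralRadius ℂ B ≠ ⊤ := by
    have := (Matrix.finite_spectrum B).to_subtype
    rw [spectralRadius, iSup_subtype']
    exact iSup_ne_top fun _ => ENNReal.coe_ne_top
  have hle : ((‖(l : ℂ)‖₊ : NNReal) : ENNReal) ≤ spectralRadius ℂ B :=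
    le_iSup₂ (f := fun k (_ : k ∈ spectrum ℂ B) => (‖k‖₊ : ENNReal)) _ hmem
  have hnorm : ((‖(l : ℂ)‖₊ : NNReal) : ENNReal).toReal = l := by
    simp [abs_of_nonneg hl]
  exact hnorm ▸ ENNReal.toReal_mono hfin hle

theorem le_rho_fin_two (a b c d : ℝ) (hbc : 0 ≤ b * c) : a ≤ rho !![a, b; c, d] := by
  rcases lt_or_ge a 0 with ha | ha
  · exact ha.le.trans ENNReal.toReal_nonneg
  set s := √((a - d) ^ 2 + 4 * (b * c))
  have hs : s ^ 2 = (a - d) ^ 2 + 4 * (b * c) := Real.sq_sqrt (by positivity)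
  have hads : a - d ≤ s := Real.le_sqrt_of_sq_le (by linarith)
  calc a ≤ (a + d + s) / 2 := by linarith
    _ ≤ _ := by
      refine le_rho_of_det_eq_zero _ (by linarith) ?_
      simp only [det_fin_two, Matrix.sub_apply, scalar_apply, diagonal_apply_eq,
        diagonal_apply_ne _ zero_ne_one, diagonal_apply_ne _ one_ne_zero, of_apply, cons_val',
        cons_val_zero, cons_val_one, cons_val_fin_one, zero_sub, mul_neg, neg_mul, neg_neg]
      linear_combination hs / 4

theorem mcDist_fin_two_le (P Q : Matrix (Fin 2) (Fin 2) ℝ) :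
    mcDist P Q ≤ 1 - √(P 0 0 * Q 0 0) := by
  have h := le_rho_fin_two (sqrtm (P ⊙ Q) 0 0) (sqrtm (P ⊙ Q) 0 1) (sqrtm (P ⊙ Q) 1 0)
    (sqrtm (P ⊙ Q) 1 1) (mul_nonneg (Real.sqrt_nonneg _) (Real.sqrt_nonneg _))
  rw [← Matrix.eta_fin_two] at h
  exact sub_le_sub_left (by simpa [sqrtm] using h) 1

def twoState (p q : ℝ) : Matrix (Fin 2) (Fin 2) ℝ := !![1 - p, p; q, 1 - q]

noncomputable def twoStateStationary (p q : ℝ) : Fin 2 → ℝ := ![q / (p + q), p / (p + q)]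

section TwoState

variable {p q : ℝ}

theorem isStochastic_twoState (hp₀ : 0 ≤ p) (hp₁ : p ≤ 1) (hq₀ : 0 ≤ q) (hq₁ : q ≤ 1) :
    IsStochastic (twoState p q) := by
  refine ⟨fun i j => ?_, fun i => ?_⟩
  · fin_cases i <;> fin_cases j <;> simp [twoState] <;> linarith
  · fin_cases i <;> simp [twoState]

theorem isIrreducibleMC_twoState (hp : 0 < p) (hq : 0 < q) : IsIrreducibleMC (twoState p q) := by
  intro i j
  by_cases hij : i = j
  · exact ⟨0, by simp [hij]⟩
  · refine ⟨1, ?_⟩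
    fin_cases i <;> fin_cases j <;> simp_all [twoState]

theorem isStationaryMC_twoState (hp : 0 < p) (hq : 0 < q) :
    IsStationaryMC (twoState p q) (twoStateStationary p q) := by
  have hpq : p + q ≠ 0 := by positivity
  refine ⟨fun i => ?_, ?_, fun j => ?_⟩
  · fin_cases i <;> simp [twoStateStationary] <;> positivity
  · simp [twoStateStationary, Fin.sum_univ_two, ← add_div, add_comm q p, hpq]
  · fin_cases j <;> simp [twoState, twoStateStationary, Fin.sum_univ_two] <;> field_simp <;> ring

theorem isReversible_twoState (p q : ℝ) : IsReversible (twoState p q) (twoStateStationary p q) := by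
  intro i j
  fin_cases i <;> fin_cases j <;> simp [twoState, twoStateStationary] <;> ring

end TwoState

theorem sum_sqrt_twoStateStationary_le {α : ℝ} (hα : 0 < α) :
    ∑ i, √(twoStateStationary α (1 / 2) i * twoStateStationary α α i) ≤ √(1 / 2) + √α := by
  have hαα : α / (α + α) = 1 / 2 := by field_simp; ring
  simp only [Fin.sum_univ_two, twoStateStationary, Matrix.cons_val_zero, Matrix.cons_val_one,
    hαα]
  gcongr
  · refine mul_le_of_le_one_left (by norm_num) ((div_le_one (by positivity)).2 ?_)
    linarith
  · rw [div_mul_eq_mul_div, div_le_iff₀ (by positivity)]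
    nlinarith

theorem distance_small_hellinger_large_general (ε : ℝ) (hε : 0 < ε) :
    ∃ (P Pbar : Matrix (Fin 2) (Fin 2) ℝ) (π πbar : Fin 2 → ℝ),
      IsStochastic P ∧ IsStochastic Pbar
        ∧ IsIrreducibleMC P ∧ IsIrreducibleMC Pbar
        ∧ IsStationaryMC P π ∧ IsStationaryMC Pbar πbar
        ∧ IsReversible P π ∧ IsReversible Pbar πbar
        ∧ mcDist P Pbar < ε
        ∧ 1 / 4 < 1 - ∑ i, Real.sqrt (π i * πbar i) := by
  set α := min (ε / 2) (1 / 900)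
  have hα₀ : 0 < α := lt_min (by linarith) (by norm_num)
  have hαε : α < ε := (min_le_left _ _).trans_lt (by linarith)
  have hα₁ : α ≤ 1 / 900 := min_le_right _ _
  refine ⟨twoState α (1 / 2), twoState α α, twoStateStationary α (1 / 2), twoStateStationary α α,
    isStochastic_twoState hα₀.le (by linarith) (by norm_num) (by norm_num),
    isStochastic_twoState hα₀.le (by linarith) hα₀.le (by linarith),
    isIrreducibleMC_twoState hα₀ (by norm_num), isIrreducibleMC_twoState hα₀ hα₀,
    isStationaryMC_twoState hα₀ (by norm_num), isStationaryMC_twoState hα₀ hα₀,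
    isReversible_twoState _ _, isReversible_twoState _ _, ?_, ?_⟩
  · calc mcDist _ _ ≤ 1 - √((1 - α) * (1 - α)) := mcDist_fin_two_le _ _
      _ = α := by rw [Real.sqrt_mul_self (by linarith)]; ring
      _ < ε := hαε
  · have hsqrt_half : √(1 / 2) < 0.71 := (Real.sqrt_lt' (by norm_num)).2 (by norm_num)
    have hsqrt_α : √α ≤ 1 / 30 := Real.sqrt_le_iff.2 ⟨by norm_num, by linarith⟩
    linarith [sum_sqrt_twoStateStationary_le hα₀]

/-- There are irreducible reversible two-state chains arbitrarily close under the
distance whose stationary distributions are far apart in Hellinger distance. -/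
theorem distance_small_hellinger_large (ε δ : ℝ) (hε : 0 < ε) (hδ : 0 < δ) :
    ∃ (P Pbar : Matrix (Fin 2) (Fin 2) ℝ) (π πbar : Fin 2 → ℝ),
      IsStochastic P ∧ IsStochastic Pbar
        ∧ IsIrreducibleMC P ∧ IsIrreducibleMC Pbar
        ∧ IsStationaryMC P π ∧ IsStationaryMC Pbar πbar
        ∧ IsReversible P π ∧ IsReversible Pbar πbar
        ∧ mcDist P Pbar < ε
        ∧ 1 / 4 < 1 - ∑ i, Real.sqrt (π i * πbar i) :=
  distance_small_hellinger_large_general ε hε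
end

section
/- Let A and B be real matrices of the same size. Then ρ(A∘B)² ≤ ρ(AAᵀ ∘ BBᵀ), where ∘ is the entrywise (Hadamard) product and ρ the spectral radius. -/
open Matrix

/-!
Over `ℂ` the block matrices `[[A Aᴴ, A], [Aᴴ, 1]] = [A; 1] [A; 1]ᴴ` and `[[B Bᴴ, B], [Bᴴ, 1]]`
are positive semidefinite, hence so is their Hadamard product
`[[A Aᴴ ⊙ B Bᴴ, A ⊙ B], [(A ⊙ B)ᴴ, 1]]` by the Schur product theorem. Taking the Schur complement
of the identity block gives `(A ⊙ B) (A ⊙ B)ᴴ ≤ A Aᴴ ⊙ B Bᴴ` in the Loewner order. In the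
C⋆-algebra of complex matrices with the operator norm this yields
`ρ(A ⊙ B)² ≤ ‖A ⊙ B‖² = ‖(A ⊙ B) (A ⊙ B)ᴴ‖ ≤ ‖A Aᴴ ⊙ B Bᴴ‖ = ρ(A Aᴴ ⊙ B Bᴴ)`,
the last step because `A Aᴴ ⊙ B Bᴴ` is self-adjoint.
-/

section CStarAlgebra

variable {A : Type*} [CStarAlgebra A]

theorem toReal_spectralRadius_le_norm (a : A) : (spectralRadius ℂ a).toReal ≤ ‖a‖ := by
  cases subsingleton_or_nontrivial A
  · simp [spectralRadius, spectrum.of_subsingleton]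
  · simpa using
      ENNReal.toReal_mono ENNReal.coe_ne_top (spectrum.spectralRadius_le_nnnorm (𝕜 := ℂ) a)

variable [PartialOrder A] [StarOrderedRing A]

theorem norm_sq_le_norm_of_mul_star_self_le {a b : A} (h : a * star a ≤ b) : ‖a‖ ^ 2 ≤ ‖b‖ := by
  rw [sq, ← CStarRing.norm_self_mul_star]
  exact CStarAlgebra.norm_le_norm_of_nonneg_of_le (mul_star_self_nonneg a) h

theorem toReal_spectralRadius_sq_le_of_mul_star_self_le {a b : A} (h : a * star a ≤ b) :
    (spectralRadius ℂ a).toReal ^ 2 ≤ (spectralRadius ℂ b).toReal := by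
  have hb : IsSelfAdjoint b := IsSelfAdjoint.of_nonneg ((mul_star_self_nonneg a).trans h)
  rw [hb.toReal_spectralRadius_complex_eq_norm]
  calc (spectralRadius ℂ a).toReal ^ 2 ≤ ‖a‖ ^ 2 := by
        gcongr
        exact toReal_spectralRadius_le_norm a
    _ ≤ ‖b‖ := norm_sq_le_norm_of_mul_star_self_le h

end CStarAlgebra

namespace Matrix

variable {m n : Type*}

theorem fromBlocks_hadamard_fromBlocks {l o α : Type*} [Mul α]
    (A₁ B₁ : Matrix m n α) (A₂ B₂ : Matrix m o α) (A₃ B₃ : Matrix l n α) (A₄ B₄ : Matrix l o α) :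
    fromBlocks A₁ A₂ A₃ A₄ ⊙ fromBlocks B₁ B₂ B₃ B₄
      = fromBlocks (A₁ ⊙ B₁) (A₂ ⊙ B₂) (A₃ ⊙ B₃) (A₄ ⊙ B₄) := by
  ext (i | i) (j | j) <;> rfl

theorem map_hadamard {α β F : Type*} [Mul α] [Mul β] [FunLike F α β] [MulHomClass F α β]
    (f : F) (A B : Matrix m n α) : (A ⊙ B).map f = A.map f ⊙ B.map f := by
  ext i j
  exact map_mul f (A i j) (B i j)

theorem map_mul_transpose_algebraMap {𝕜 : Type*} [Fintype n] [RCLike 𝕜] (A : Matrix m n ℝ) :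
    (A * Aᵀ).map (algebraMap ℝ 𝕜) = A.map (algebraMap ℝ 𝕜) * (A.map (algebraMap ℝ 𝕜))ᴴ := by
  rw [Matrix.map_mul, ← conjTranspose_map _ fun x => (RCLike.conj_ofReal x).symm,
    conjTranspose_eq_transpose_of_trivial]

variable [Fintype m] [Fintype n] [DecidableEq n] {𝕜 : Type*} [RCLike 𝕜]

open scoped ComplexOrder MatrixOrder

theorem posSemidef_fromBlocks_mul_conjTranspose_one (A : Matrix m n 𝕜) :
    (fromBlocks (A * Aᴴ) A Aᴴ 1).PosSemidef := by
  simpa [conjTranspose_fromRows_eq_fromCols_conjTranspose, fromRows_mul_fromCols] using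
    posSemidef_self_mul_conjTranspose (fromRows A (1 : Matrix n n 𝕜))

theorem hadamard_mul_conjTranspose_le (A B : Matrix m n 𝕜) :
    (A ⊙ B) * (A ⊙ B)ᴴ ≤ (A * Aᴴ) ⊙ (B * Bᴴ) := by
  have h := (posSemidef_fromBlocks_mul_conjTranspose_one A).hadamard
    (posSemidef_fromBlocks_mul_conjTranspose_one B)
  let : Invertible (1 : Matrix n n 𝕜) := invertibleOne
  rw [fromBlocks_hadamard_fromBlocks, ← conjTranspose_hadamard, hadamard_comm B,
    hadamard_one_eq_one_iff.mpr diag_one,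
    PosDef.fromBlocks₂₂ _ _ PosDef.one, inv_one, Matrix.mul_one] at h
  exact h

end Matrix

/-- `ρ(A∘B)² ≤ ρ(AAᵀ ∘ BBᵀ)` for real square matrices, where `∘` is the Hadamard
product. -/
theorem rho_hadamard_sq_le {n : Type*} [Fintype n] [DecidableEq n]
    (A B : Matrix n n ℝ) :
    rho (Matrix.hadamard A B) ^ 2
      ≤ rho (Matrix.hadamard (A * Aᵀ) (B * Bᵀ)) := by
  open scoped MatrixOrder Matrix.Norms.L2Operator in
  have h := hadamard_mul_conjTranspose_le (A.map (algebraMap ℝ ℂ)) (B.map (algebraMap ℝ ℂ))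
  rw [← map_mul_transpose_algebraMap A, ← map_mul_transpose_algebraMap B, ← map_hadamard,
    ← map_hadamard] at h
  exact toReal_spectralRadius_sq_le_of_mul_star_self_le h
end
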